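/- arXiv:math/0410030 — 6 statements merged into one kernel-verified Lean document; each statement's English description precedes it below -/
import Mathlib

section
/- The cover pebbling number of the path P_n on n vertices is 2^n - 1. -/
/-!
Give vertex `i` of the path the weight `2 ^ i`. A pebbling step from `i` removes weight
`2 * 2 ^ i` and adds at most `2 ^ (i + 1)`, so the total weight never increases, while a covered
distribution has weight at least `2 ^ n - 1`; hence fewer pebbles stacked on the first vertex
cannot be covered.

Conversely, by induction on the path, `(m + 2) * 2 ^ n - 1` pebbles on `n + 1` vertices cover
every vertex and leave `m + 1` pebbles on the last one: if the last vertex holds more than that,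
its surplus is pebbled onto the shorter path; otherwise the shorter path is made to leave twice
the deficit on its own last vertex, and half of that is pebbled across.
-/

open SimpleGraph Finset

/-- A pebbling step: remove two pebbles from `u` and place one on an adjacent vertex `v`. -/
def PebblingStep {V : Type*} [DecidableEq V] (G : SimpleGraph V) (D D' : V → ℕ) : Prop :=
  ∃ u v, G.Adj u v ∧ 2 ≤ D u ∧
    D' = fun w => if w = u then D u - 2 else if w = v then D v + 1 else D w

/-- A distribution is coverable if pebbling steps can put a pebble on every vertex. -/
def Coverable {V : Type*} [DecidableEq V] (G : SimpleGraph V) (D : V → ℕ) : Prop :=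
  ∃ D', Relation.ReflTransGen (PebblingStep G) D D' ∧ ∀ v, 1 ≤ D' v

/-- The cover pebbling number: the least `N` such that every distribution of `N` pebbles
is coverable. -/
noncomputable def coverPebblingNumber {V : Type*} [DecidableEq V] [Fintype V]
    (G : SimpleGraph V) : ℕ :=
  sInf {N | ∀ D : V → ℕ, ∑ v, D v = N → Coverable G D}

/-- A color-respecting pebbling step on a colored distribution. -/
def ColorStep {V C : Type*} [DecidableEq V] [DecidableEq C] (G : SimpleGraph V)
    (D D' : V → C → ℕ) : Prop :=
  ∃ u v c, G.Adj u v ∧ 2 ≤ D u c ∧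
    D' = fun w d => if w = u ∧ d = c then D u c - 2
      else if w = v ∧ d = c then D v c + 1 else D w d

/-- A colored distribution is `Q`-coverable if color-respecting steps can put at least `Q`
pebbles on every vertex. -/
def QCoverable {V C : Type*} [DecidableEq V] [DecidableEq C] [Fintype C] (G : SimpleGraph V)
    (Q : ℕ) (D : V → C → ℕ) : Prop :=
  ∃ D', Relation.ReflTransGen (ColorStep G) D D' ∧ ∀ v, Q ≤ ∑ c, D' v c

/-- A graph is good if its cover pebbling number is realized by a simple distribution. -/
def IsGood {V : Type*} [DecidableEq V] [Fintype V] (G : SimpleGraph V) : Prop :=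
  ∃ u : V, coverPebblingNumber G = ∑ w : V, 2 ^ G.dist u w


open Relation

section Pebbling

variable {V : Type*} [DecidableEq V] {G : SimpleGraph V}

def movePebbles (D : V → ℕ) (u v : V) (j : ℕ) : V → ℕ :=
  fun w => if w = u then D u - 2 * j else if w = v then D v + j else D w

lemma movePebbles_zero (D : V → ℕ) (u v : V) : movePebbles D u v 0 = D := by
  funext w
  unfold movePebbles
  split_ifs <;> simp_all

lemma movePebbles_movePebbles (D : V → ℕ) {u v : V} (huv : u ≠ v) (i j : ℕ) :
    movePebbles (movePebbles D u v i) u v j = movePebbles D u v (i + j) := by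
  funext w
  unfold movePebbles
  split_ifs <;> simp_all [Ne.symm huv] <;> omega

lemma pebblingStep_movePebbles {D : V → ℕ} {u v : V} (huv : G.Adj u v) (hu : 2 ≤ D u) :
    PebblingStep G D (movePebbles D u v 1) :=
  ⟨u, v, huv, hu, rfl⟩

lemma reflTransGen_movePebbles {D : V → ℕ} {u v : V} (huv : G.Adj u v) (j : ℕ)
    (hj : 2 * j ≤ D u) : ReflTransGen (PebblingStep G) D (movePebbles D u v j) := by
  induction j with
  | zero => rw [movePebbles_zero]
  | succ j ih =>
    rw [← movePebbles_movePebbles D huv.ne]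
    exact (ih (by omega)).tail (pebblingStep_movePebbles huv (by simp [movePebbles]; omega))

variable [Fintype V]

lemma weighted_sum_le_of_pebblingStep (f : V → ℕ) (hf : ∀ u v, G.Adj u v → f v ≤ 2 * f u)
    {D D' : V → ℕ} (h : PebblingStep G D D') : ∑ w, D' w * f w ≤ ∑ w, D w * f w := by
  obtain ⟨u, v, huv, hu, rfl⟩ := h
  have hpoint : ∀ w, (if w = u then D u - 2 else if w = v then D v + 1 else D w) * f w +
      (if w = u then 2 * f u else 0) = D w * f w + (if w = v then f v else 0) := by
    intro w
    by_cases hwu : w = u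
    · subst hwu
      simp only [if_true, if_neg huv.ne]
      rw [Nat.sub_mul]
      have : 2 * f w ≤ D w * f w := Nat.mul_le_mul_right _ hu
      omega
    · by_cases hwv : w = v
      · subst hwv
        simp [hwu, add_mul]
      · simp [hwu, hwv]
  have hsum := sum_congr rfl fun w (_ : w ∈ univ) => hpoint w
  simp only [sum_add_distrib, sum_ite_eq', mem_univ, if_true] at hsum
  have := hf u v huv
  beta_reduce
  omega

lemma weighted_sum_le_of_reflTransGen (f : V → ℕ) (hf : ∀ u v, G.Adj u v → f v ≤ 2 * f u)
    {D D' : V → ℕ} (h : ReflTransGen (PebblingStep G) D D') :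
    ∑ w, D' w * f w ≤ ∑ w, D w * f w := by
  induction h with
  | refl => rfl
  | tail _ hstep ih => exact (weighted_sum_le_of_pebblingStep f hf hstep).trans ih

lemma coverPebblingNumber_eq_of_forall {N : ℕ}
    (hcov : ∀ D : V → ℕ, ∑ v, D v = N → Coverable G D)
    (hnot : ∀ M < N, ∃ D : V → ℕ, ∑ v, D v = M ∧ ¬Coverable G D) :
    coverPebblingNumber G = N := by
  refine le_antisymm (Nat.sInf_le hcov) (le_csInf ⟨N, hcov⟩ fun M hM => ?_)
  by_contra! hMN
  obtain ⟨D, hD, hD'⟩ := hnot M hMN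
  exact hD' (hM D hD)

end Pebbling

section PathGraph

variable {n : ℕ}

lemma two_pow_le_of_pathGraph_adj {u v : Fin n} (h : (pathGraph n).Adj u v) :
    2 ^ (v : ℕ) ≤ 2 * 2 ^ (u : ℕ) := by
  rw [← pow_succ']
  exact Nat.pow_le_pow_right two_pos (by rw [pathGraph_adj] at h; omega)

lemma two_pow_sub_one_le_of_coverable {D : Fin n → ℕ} (h : Coverable (pathGraph n) D) :
    2 ^ n - 1 ≤ ∑ v, D v * 2 ^ (v : ℕ) := by
  obtain ⟨D', hDD', hcov⟩ := h
  calc 2 ^ n - 1 = ∑ v : Fin n, 2 ^ (v : ℕ) := by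
        simp [Fin.sum_univ_eq_sum_range (2 ^ ·), Nat.geomSum_eq le_rfl]
    _ ≤ ∑ v, D' v * 2 ^ (v : ℕ) := sum_le_sum fun v _ => Nat.le_mul_of_pos_left _ (hcov v)
    _ ≤ ∑ v, D v * 2 ^ (v : ℕ) :=
        weighted_sum_le_of_reflTransGen _ (fun _ _ => two_pow_le_of_pathGraph_adj) hDD'

lemma pathGraph_adj_castSucc {u v : Fin (n + 1)} (h : (pathGraph (n + 1)).Adj u v) :
    (pathGraph (n + 2)).Adj u.castSucc v.castSucc := by
  simpa [pathGraph_adj] using h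

lemma pathGraph_adj_castSucc_last :
    (pathGraph (n + 2)).Adj (Fin.last n).castSucc (Fin.last (n + 1)) := by
  simp [pathGraph_adj]

lemma pebblingStep_snoc (a : ℕ) {E E' : Fin (n + 1) → ℕ}
    (h : PebblingStep (pathGraph (n + 1)) E E') :
    PebblingStep (pathGraph (n + 2)) (Fin.snoc E a) (Fin.snoc E' a) := by
  obtain ⟨u, v, huv, hu, rfl⟩ := h
  refine ⟨u.castSucc, v.castSucc, pathGraph_adj_castSucc huv, by simpa using hu, ?_⟩
  funext w
  induction w using Fin.lastCases with
  | last => simp [(Fin.castSucc_lt_last _).ne']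
  | cast x => simp [Fin.castSucc_inj]

lemma reflTransGen_snoc (a : ℕ) {E E' : Fin (n + 1) → ℕ}
    (h : ReflTransGen (PebblingStep (pathGraph (n + 1))) E E') :
    ReflTransGen (PebblingStep (pathGraph (n + 2))) (Fin.snoc E a) (Fin.snoc E' a) :=
  h.lift (p := PebblingStep (pathGraph (n + 2))) (Fin.snoc · a) fun _ _ => pebblingStep_snoc a

lemma movePebbles_snoc_last_castSucc (E : Fin (n + 1) → ℕ) (k j : ℕ) :
    movePebbles (Fin.snoc E k : Fin (n + 2) → ℕ) (Fin.last (n + 1)) (Fin.last n).castSucc j =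
      Fin.snoc (E + Pi.single (Fin.last n) j) (k - 2 * j) := by
  funext w
  induction w using Fin.lastCases with
  | last => simp [movePebbles]
  | cast x =>
    by_cases hx : x = Fin.last n <;> simp [movePebbles, hx, (Fin.castSucc_lt_last _).ne]

lemma movePebbles_snoc_castSucc_last (E : Fin (n + 1) → ℕ) (k j : ℕ) :
    movePebbles (Fin.snoc E k : Fin (n + 2) → ℕ) (Fin.last n).castSucc (Fin.last (n + 1)) j =
      Fin.snoc (E - Pi.single (Fin.last n) (2 * j)) (k + j) := by
  funext w
  induction w using Fin.lastCases with
  | last => simp [movePebbles, (Fin.castSucc_lt_last _).ne']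
  | cast x =>
    by_cases hx : x = Fin.last n <;> simp [movePebbles, hx, (Fin.castSucc_lt_last _).ne]

end PathGraph

lemma exists_cover_pathGraph_of_le_sum (n m : ℕ) (D : Fin (n + 1) → ℕ)
    (h : (m + 2) * 2 ^ n ≤ ∑ v, D v + 1) :
    ∃ D', ReflTransGen (PebblingStep (pathGraph (n + 1))) D D' ∧ (∀ v, 1 ≤ D' v) ∧
      m + 1 ≤ D' (Fin.last n) := by
  induction n generalizing m with
  | zero =>
    rw [Fin.sum_univ_one, pow_zero, mul_one] at h
    exact ⟨D, .refl, fun v => by rw [Fin.fin_one_eq_zero v]; omega, show m + 1 ≤ D 0 by omega⟩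
  | succ n ih =>
    obtain ⟨E, k, rfl⟩ : ∃ E k, D = Fin.snoc E k := ⟨_, _, (Fin.snoc_init_self D).symm⟩
    rw [Fin.sum_snoc, pow_succ] at h
    have hpos : 1 ≤ 2 ^ n := Nat.one_le_two_pow
    by_cases hk : m + 1 ≤ k
    · set j := (k - (m + 1)) / 2
      have hmove := reflTransGen_movePebbles pathGraph_adj_castSucc_last.symm j
        (D := Fin.snoc E k) (by rw [Fin.snoc_last]; omega)
      rw [movePebbles_snoc_last_castSucc] at hmove
      obtain ⟨E', hEE', hcov, -⟩ := ih 0 (E + Pi.single (Fin.last n) j) (by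
        simp only [Pi.add_apply, sum_add_distrib, sum_pi_single', mem_univ, if_true]
        have : 2 * m + 4 * 2 ^ n ≤ ∑ v, E v + k + 1 := by
          nlinarith [Nat.le_mul_of_pos_right m hpos]
        omega)
      refine ⟨Fin.snoc E' (k - 2 * j), hmove.trans (reflTransGen_snoc _ hEE'), ?_, ?_⟩
      · simp only [Fin.forall_fin_succ', Fin.snoc_castSucc, hcov, implies_true, Fin.snoc_last,
          true_and]
        omega
      · rw [Fin.snoc_last]
        omega
    · set d := m + 1 - k
      obtain ⟨E', hEE', hcov, hlast⟩ := ih (2 * d) E (by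
        nlinarith [Nat.le_mul_of_pos_right k hpos, show m + 1 = d + k by omega])
      have hmove := reflTransGen_movePebbles pathGraph_adj_castSucc_last d
        (D := Fin.snoc E' k) (by rw [Fin.snoc_castSucc]; omega)
      rw [movePebbles_snoc_castSucc_last] at hmove
      refine ⟨_, (reflTransGen_snoc _ hEE').trans hmove, ?_, ?_⟩
      · simp only [Fin.forall_fin_succ', Fin.snoc_castSucc, Pi.sub_apply, ne_eq,
          Fin.castSucc_ne_last, not_false_eq_true, Pi.single_eq_of_ne, tsub_zero,
          Pi.single_eq_same, Fin.snoc_last]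
        exact ⟨⟨fun i => hcov _, by omega⟩, by omega⟩
      · rw [Fin.snoc_last]
        omega

theorem path_cover_pebbling (n : ℕ) (hn : 1 ≤ n) :
    coverPebblingNumber (pathGraph n) = 2 ^ n - 1 := by
  obtain ⟨n, rfl⟩ := Nat.exists_eq_add_of_le' hn
  refine coverPebblingNumber_eq_of_forall (fun (D : Fin (n + 1) → ℕ) hD => ?_) fun M hM => ?_
  · obtain ⟨D', hDD', hcov, -⟩ := exists_cover_pathGraph_of_le_sum n 0 D (by rw [hD, pow_succ]; omega)
    exact ⟨D', hDD', hcov⟩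
  · refine ⟨fun v => if v = 0 then M else 0, by simp, fun hcov => ?_⟩
    have hweight : 2 ^ (n + 1) - 1 ≤ M := by
      simpa [ite_mul] using two_pow_sub_one_le_of_coverable hcov
    omega
end

section
/- The cover pebbling number of the cycle C_n on n vertices is 2^r + 2^{n-r+1} - 3, where r = ⌈n/2⌉. -/
open SimpleGraph Finset

/-
Lower bound: weight a pebble on `v` by `2 ^ d(0, v)`, where `d(0, v) = cycleDist v` is the graph
distance. No pebbling step increases the total weight, because it trades two pebbles on `u` for
one on a neighbour `v` and `d(0, v) ≤ d(0, u) + 1`. A covering distribution weighs at least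
`∑ v, 2 ^ d(0, v)`, which is the claimed value, whereas `N` pebbles stacked on `0` weigh `N`.

Upper bound: a path on `M` vertices is covered by any `2 ^ M - 1` pebbles lying on it. Let
`r = ⌈n / 2⌉` and slide a window of `r - 1` consecutive vertices around the cycle. If its content
crosses `2 ^ r - 1`, the cycle splits into an arc of `r` vertices carrying at least `2 ^ r - 1`
pebbles and an arc of the other `n - r` vertices, which receives half of the surplus at the
junction. If every window is heavy, two complementary arcs suffice directly. If every window is
light, then for odd `n` every vertex is occupied; for even `n = 2 m` the content of a half-cycle
changes by less than `2 ^ m - 1` under rotation, so some half-cycle carries between `2 ^ m - 1`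
and `2 ^ (m + 1) - 2` pebbles, and then both half-cycles can be covered.
-/

theorem sum_range_two_pow (n : ℕ) : ∑ i ∈ range n, 2 ^ i = 2 ^ n - 1 := by
  simpa using Nat.geomSum_eq le_rfl n

theorem exists_two_pow_sub_le_of_sum (f : ℕ → ℕ) (M : ℕ)
    (h : 2 ^ (M + 1) ≤ ∑ i ∈ range (M + 1), f i + 1) : ∃ j ≤ M, 2 ^ (M - j) ≤ f j := by
  by_contra! hf
  have hle : ∑ i ∈ range (M + 1), (f i + 1) ≤ ∑ i ∈ range (M + 1), 2 ^ (M - i) :=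
    sum_le_sum fun i hi => hf i (Nat.lt_succ_iff.1 (mem_range.1 hi))
  have hgeom : ∑ i ∈ range (M + 1), 2 ^ (M - i) = 2 ^ (M + 1) - 1 := by
    rw [← sum_range_reflect, ← sum_range_two_pow]
    refine sum_congr rfl fun i hi => ?_
    have := mem_range.1 hi
    congr 1; omega
  rw [sum_add_distrib, sum_const, card_range, smul_eq_mul, mul_one, hgeom] at hle
  omega

theorem exists_lt_le_succ {α : Type*} [LinearOrder α] (f : ℕ → α) {T : α} {k : ℕ}
    (h₀ : f 0 < T) (hk : T ≤ f k) : ∃ i, f i < T ∧ T ≤ f (i + 1) := by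
  induction k with
  | zero => exact absurd hk (not_le.2 h₀)
  | succ k ih =>
    by_cases hfk : T ≤ f k
    · exact ih hfk
    · exact ⟨k, not_le.1 hfk, hk⟩

section Pebbling

variable {V : Type*} [DecidableEq V] {G : SimpleGraph V}

abbrev PebblingReachable (G : SimpleGraph V) : (V → ℕ) → (V → ℕ) → Prop :=
  Relation.ReflTransGen (PebblingStep G)

theorem pebblingStep_iff {D D' : V → ℕ} :
    PebblingStep G D D' ↔
      ∃ u v, ∃ R : V → ℕ, G.Adj u v ∧ D = R + Pi.single u 2 ∧ D' = R + Pi.single v 1 := by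
  constructor
  · rintro ⟨u, v, huv, h2, rfl⟩
    refine ⟨u, v, Function.update D u (D u - 2), huv, funext fun w => ?_, funext fun w => ?_⟩
    all_goals
      by_cases hwu : w = u
      · subst hwu; simp [huv.ne] <;> omega
      · by_cases hwv : w = v
        · subst hwv; simp [huv.ne']
        · simp [hwu, hwv]
  · rintro ⟨u, v, R, huv, rfl, rfl⟩
    refine ⟨u, v, huv, by simp, funext fun w => ?_⟩
    by_cases hwu : w = u
    · subst hwu; simp [huv.ne]
    · by_cases hwv : w = v
      · subst hwv; simp [huv.ne']
      · simp [hwu, hwv]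

theorem pebblingStep_single {u v : V} (huv : G.Adj u v) :
    PebblingStep G (Pi.single u 2) (Pi.single v 1) :=
  pebblingStep_iff.2 ⟨u, v, 0, huv, (zero_add _).symm, (zero_add _).symm⟩

theorem PebblingStep.add_right {D D' : V → ℕ} (h : PebblingStep G D D') (E : V → ℕ) :
    PebblingStep G (D + E) (D' + E) := by
  obtain ⟨u, v, R, huv, rfl, rfl⟩ := pebblingStep_iff.1 h
  exact pebblingStep_iff.2 ⟨u, v, R + E, huv, by abel, by abel⟩

theorem PebblingReachable.add_right {D D' : V → ℕ} (h : PebblingReachable G D D')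
    (E : V → ℕ) : PebblingReachable G (D + E) (D' + E) :=
  h.lift (· + E) fun _ _ hstep => hstep.add_right E

theorem pebblingReachable_move {u v : V} (huv : G.Adj u v) (k : ℕ) (E : V → ℕ) :
    PebblingReachable G (E + Pi.single u (2 * k)) (E + Pi.single v k) := by
  induction k generalizing E with
  | zero => simpa using Relation.ReflTransGen.refl
  | succ k ih =>
    have hstep : PebblingReachable G (Pi.single u 2 + (E + Pi.single u (2 * k)))
        (Pi.single v 1 + (E + Pi.single u (2 * k))) :=
      .single ((pebblingStep_single huv).add_right _)
    rw [show Pi.single v 1 + (E + Pi.single u (2 * k)) = E + Pi.single v 1 + Pi.single u (2 * k)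
      by abel] at hstep
    convert hstep.trans (ih (E + Pi.single v 1)) using 1
    · rw [mul_add, mul_one, Pi.single_add]; abel
    · rw [Pi.single_add]; abel

theorem pebblingReachable_walk (p : ℕ → V) (t : ℕ) (hp : ∀ i < t, G.Adj (p i) (p (i + 1)))
    (E : V → ℕ) : PebblingReachable G (E + Pi.single (p 0) (2 ^ t)) (E + Pi.single (p t) 1) := by
  induction t generalizing p with
  | zero => exact .refl
  | succ t ih =>
    have hmove := pebblingReachable_move (hp 0 t.succ_pos) (2 ^ t) E
    rw [← pow_succ'] at hmove
    exact hmove.trans (ih (fun i => p (i + 1)) fun i hi => hp (i + 1) (by omega))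

theorem exists_eq_add_single {D : V → ℕ} {u : V} {c : ℕ} (h : c ≤ D u) :
    ∃ R : V → ℕ, D = R + Pi.single u c := by
  refine ⟨Function.update D u (D u - c), funext fun w => ?_⟩
  by_cases hwu : w = u
  · subst hwu
    simp only [Pi.add_apply, Function.update_self, Pi.single_eq_same]
    omega
  · simp [hwu]

end Pebbling

section Covering

variable {V : Type*} [DecidableEq V] {G : SimpleGraph V}

def CoversOn (G : SimpleGraph V) (D : V → ℕ) (S : Set V) : Prop :=
  ∃ D', PebblingReachable G D D' ∧ ∀ v ∈ S, 1 ≤ D' v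

theorem coverable_iff_coversOn_univ {D : V → ℕ} : Coverable G D ↔ CoversOn G D Set.univ := by
  simp [Coverable, CoversOn]

theorem coversOn_of_forall {D : V → ℕ} {S : Set V} (h : ∀ v ∈ S, 1 ≤ D v) : CoversOn G D S :=
  ⟨D, .refl, h⟩

theorem CoversOn.of_pebblingReachable {D D' : V → ℕ} {S : Set V} (h : PebblingReachable G D D')
    (h' : CoversOn G D' S) : CoversOn G D S :=
  let ⟨D'', h'', hS⟩ := h'
  ⟨D'', h.trans h'', hS⟩

theorem CoversOn.add {D E : V → ℕ} {S T : Set V} (hD : CoversOn G D S) (hE : CoversOn G E T) :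
    CoversOn G (D + E) (S ∪ T) := by
  obtain ⟨D', hD', hS⟩ := hD
  obtain ⟨E', hE', hT⟩ := hE
  refine ⟨D' + E', (hD'.add_right E).trans ?_, ?_⟩
  · simpa only [add_comm D'] using hE'.add_right D'
  · rintro v (hv | hv)
    · exact (hS v hv).trans (Nat.le_add_right _ _)
    · exact (hT v hv).trans (Nat.le_add_left _ _)

theorem CoversOn.mono {D E : V → ℕ} {S T : Set V} (h : CoversOn G D S) (hDE : D ≤ E)
    (hTS : T ⊆ S) : CoversOn G E T := by
  have h' := h.add (coversOn_of_forall (D := E - D) (S := ∅) (by simp))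
  rw [add_tsub_cancel_of_le hDE, Set.union_empty] at h'
  obtain ⟨D', hD', hS⟩ := h'
  exact ⟨D', hD', fun v hv => hS v (hTS hv)⟩

theorem CoversOn.union_of_disjoint {D : V → ℕ} {S T : Set V} (hST : Disjoint S T)
    (hS : CoversOn G (S.indicator D) S) (hT : CoversOn G (T.indicator D) T) :
    CoversOn G D (S ∪ T) := by
  refine (hS.add hT).mono (fun v => ?_) subset_rfl
  have h := Set.indicator_le_self (S ∪ T) D v
  rwa [Set.indicator_union_of_disjoint hST] at h

end Covering

section Paths

variable {V : Type*} {G : SimpleGraph V}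

def IsPathSeq (G : SimpleGraph V) (p : ℕ → V) (M : ℕ) : Prop :=
  (∀ i, i + 1 < M → G.Adj (p i) (p (i + 1))) ∧ Set.InjOn p (Set.Iio M)

theorem IsPathSeq.mono {p : ℕ → V} {M N : ℕ} (h : IsPathSeq G p M) (hNM : N ≤ M) :
    IsPathSeq G p N :=
  ⟨fun i hi => h.1 i (by omega), h.2.mono (Set.Iio_subset_Iio hNM)⟩

theorem IsPathSeq.shift {p : ℕ → V} {a b : ℕ} (h : IsPathSeq G p (a + b)) :
    IsPathSeq G (fun i => p (a + i)) b := by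
  refine ⟨fun i hi => h.1 (a + i) (by omega), fun i hi j hj hij => ?_⟩
  simp only [Set.mem_Iio] at hi hj
  have := h.2 (show a + i < a + b by omega) (show a + j < a + b by omega) hij
  omega

variable [DecidableEq V]

theorem sum_pi_single_comp {p : ℕ → V} {N j : ℕ} {s : Finset ℕ} (hp : Set.InjOn p (Set.Iio N))
    (hs : s ⊆ range N) (hj : j < N) (x : ℕ) :
    ∑ i ∈ s, (Pi.single (p j) x : V → ℕ) (p i) = if j ∈ s then x else 0 := by
  rw [← sum_ite_eq' s j fun _ => x]
  refine sum_congr rfl fun i hi => ?_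
  have hij : p i = p j ↔ i = j :=
    hp.eq_iff (by simpa using mem_range.1 (hs hi)) (by simpa using hj)
  simp [Pi.single_apply, hij, eq_comm]

theorem exists_pebblingReachable_last_of_eq_zero {p : ℕ → V} {M : ℕ}
    (hp : IsPathSeq G p (M + 1)) {D : V → ℕ} (hempty : D (p M) = 0)
    (hD : 2 ^ (M + 1) ≤ ∑ i ∈ range (M + 1), D (p i) + 1) :
    ∃ R : V → ℕ, PebblingReachable G D (R + Pi.single (p M) 1) ∧
      2 ^ M ≤ ∑ i ∈ range M, R (p i) + 1 := by
  -- some `p j` holds `2 ^ (M - j)` pebbles, enough to send one to `p M`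
  obtain ⟨j, hjM, hj⟩ := exists_two_pow_sub_le_of_sum (fun i => D (p i)) M hD
  have hjM' : j < M := lt_of_le_of_ne hjM (by rintro rfl; simp [hempty] at hj)
  have hpow : 2 ^ (M - j) ≤ 2 ^ M := Nat.pow_le_pow_right two_pos (Nat.sub_le _ _)
  rw [sum_range_succ, hempty, pow_succ] at hD
  obtain ⟨R, rfl⟩ := exists_eq_add_single hj
  refine ⟨R, ?_, ?_⟩
  · simpa [Nat.add_sub_cancel' hjM] using pebblingReachable_walk (fun i => p (j + i))
      (M - j) (fun i hi => hp.1 (j + i) (by omega)) R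
  · simp only [Pi.add_apply, sum_add_distrib, sum_pi_single_comp hp.2
      (range_subset_range.2 M.le_succ) (Nat.lt_succ_of_le hjM), mem_range, if_pos hjM'] at hD
    omega

theorem exists_pebblingReachable_last_of_pos {p : ℕ → V} {M : ℕ}
    (hp : IsPathSeq G p (M + 1)) {D : V → ℕ} (hpos : 0 < D (p M))
    (hD : 2 ^ (M + 1) ≤ ∑ i ∈ range (M + 1), D (p i) + 1) :
    ∃ R : V → ℕ, PebblingReachable G D (R + Pi.single (p M) 1) ∧
      2 ^ M ≤ ∑ i ∈ range M, R (p i) + 1 := by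
  -- keep one pebble on `p M` and push half of the others to `p (M - 1)`
  obtain ⟨k, hk⟩ : ∃ k, k = (D (p M) - 1) / 2 := ⟨_, rfl⟩
  rw [sum_range_succ, pow_succ] at hD
  have key : 2 ^ M ≤ ∑ i ∈ range M, D (p i) + k + 1 := by omega
  obtain ⟨R, rfl⟩ := exists_eq_add_single (D := D) (u := p M) (c := 2 * k + 1) (by omega)
  have hsum (j x : ℕ) (hj : j < M + 1) :=
    sum_pi_single_comp hp.2 (range_subset_range.2 M.le_succ) hj x
  simp only [Pi.add_apply, sum_add_distrib, hsum M _ M.lt_succ_self, mem_range,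
    lt_irrefl, if_false, add_zero] at key
  rcases M.eq_zero_or_pos with rfl | hM
  · exact ⟨R + Pi.single (p 0) (2 * k), by rw [add_assoc, ← Pi.single_add], by simp⟩
  refine ⟨R + Pi.single (p (M - 1)) k, ?_, ?_⟩
  · have hmove := pebblingReachable_move (G := G) (hp.1 (M - 1) (by omega)).symm k R
    rw [Nat.sub_add_cancel hM] at hmove
    rw [Pi.single_add, ← add_assoc]
    exact hmove.add_right _
  · rw [sum_congr rfl fun i _ => Pi.add_apply R _ (p i), sum_add_distrib,
      hsum (M - 1) _ (by omega), if_pos (mem_range.2 (by omega))]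
    exact key

theorem coversOn_path {p : ℕ → V} {M : ℕ} (hp : IsPathSeq G p M) {D : V → ℕ}
    (hD : 2 ^ M ≤ ∑ i ∈ range M, D (p i) + 1) : CoversOn G D (p '' Set.Iio M) := by
  induction M generalizing D with
  | zero => exact coversOn_of_forall (by simp)
  | succ M ih =>
    obtain ⟨R, hR, hRsum⟩ := (D (p M)).eq_zero_or_pos.elim
      (exists_pebblingReachable_last_of_eq_zero hp · hD)
      (exists_pebblingReachable_last_of_pos hp · hD)
    have hcov := (ih (hp.mono M.le_succ) hRsum).add
      (coversOn_of_forall (S := {p M}) (D := Pi.single (p M) 1) (by simp))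
    refine (hcov.of_pebblingReachable hR).mono le_rfl ?_
    rintro _ ⟨i, hi, rfl⟩
    rcases Nat.lt_succ_iff_lt_or_eq.1 hi with hi | rfl
    · exact Or.inl ⟨i, hi, rfl⟩
    · exact Or.inr rfl

end Paths

section Splitting

variable {V : Type*} [DecidableEq V] {G : SimpleGraph V}

theorem coversOn_path_append {p : ℕ → V} {a b : ℕ} (hp : IsPathSeq G p (a + b)) {D : V → ℕ}
    (ha : 2 ^ a ≤ ∑ i ∈ range a, D (p i) + 1)
    (hb : 2 ^ b ≤ ∑ i ∈ Ico a (a + b), D (p i) + 1) :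
    CoversOn G D (p '' Set.Iio (a + b)) := by
  set q : ℕ → V := fun i => p (a + i) with hq
  have hunion : p '' Set.Iio (a + b) = p '' Set.Iio a ∪ q '' Set.Iio b := by
    ext v
    constructor
    · rintro ⟨i, hi, rfl⟩
      by_cases hia : i < a
      · exact Or.inl ⟨i, hia, rfl⟩
      · refine Or.inr ⟨i - a, by simp only [Set.mem_Iio] at hi ⊢; omega, ?_⟩
        simp only [hq, Nat.add_sub_cancel' (not_lt.1 hia)]
    · rintro (⟨i, hi, rfl⟩ | ⟨i, hi, rfl⟩)
      · exact ⟨i, by simp only [Set.mem_Iio] at hi ⊢; omega, rfl⟩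
      · exact ⟨a + i, by simp only [Set.mem_Iio] at hi ⊢; omega, rfl⟩
  have hdisj : Disjoint (p '' Set.Iio a) (q '' Set.Iio b) := by
    rw [Set.disjoint_left]
    rintro _ ⟨i, hi, rfl⟩ ⟨j, hj, hij⟩
    simp only [Set.mem_Iio] at hi hj
    have := hp.2 (show a + j < a + b by omega) (show i < a + b by omega) hij
    omega
  rw [hunion]
  refine CoversOn.union_of_disjoint hdisj (coversOn_path (hp.mono (by omega)) ?_)
    (coversOn_path hp.shift ?_)
  · rwa [sum_congr rfl fun i hi =>
      Set.indicator_of_mem (Set.mem_image_of_mem p (by simpa using hi)) D]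
  · rw [sum_Ico_eq_sum_range, add_tsub_cancel_left] at hb
    rwa [sum_congr rfl fun i hi =>
      Set.indicator_of_mem (Set.mem_image_of_mem q (by simpa using hi)) D]

theorem coversOn_path_of_cut {p : ℕ → V} {a b : ℕ} (hp : IsPathSeq G p (a + 1 + b))
    (hb : 0 < b) {D : V → ℕ}
    (hlow : ∑ i ∈ range a, D (p i) ≤ 2 ^ (a + 1) - 1)
    (hhigh : 2 ^ (a + 1) - 1 ≤ ∑ i ∈ range (a + 1), D (p i))
    (htotal : 2 ^ (a + 1) + 2 ^ (b + 1) ≤ ∑ i ∈ range (a + 1 + b), D (p i) + 3) :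
    CoversOn G D (p '' Set.Iio (a + 1 + b)) := by
  obtain ⟨k, hk⟩ : ∃ k, k = (∑ i ∈ range (a + 1), D (p i) - (2 ^ (a + 1) - 1)) / 2 := ⟨_, rfl⟩
  rw [← sum_range_add_sum_Ico _ (by omega : a + 1 ≤ a + 1 + b), sum_range_succ] at htotal
  rw [sum_range_succ] at hhigh hk
  rw [pow_succ 2 b] at htotal
  have hpow : 1 ≤ 2 ^ (a + 1) := Nat.one_le_two_pow
  have hfirst : 2 ^ (a + 1) ≤ ∑ i ∈ range a, D (p i) + (D (p a) - 2 * k) + 1 := by omega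
  have hsecond : 2 ^ b ≤ ∑ i ∈ Ico (a + 1) (a + 1 + b), D (p i) + k + 1 := by omega
  obtain ⟨R, rfl⟩ := exists_eq_add_single (D := D) (u := p a) (c := 2 * k) (by omega)
  have hsingle (j x : ℕ) (hj : j < a + 1 + b) {s : Finset ℕ} (hs : s ⊆ range (a + 1 + b)) :=
    sum_pi_single_comp hp.2 hs hj x
  have h₀ : range a ⊆ range (a + 1 + b) := range_subset_range.2 (by omega)
  have h₁ : range (a + 1) ⊆ range (a + 1 + b) := range_subset_range.2 (by omega)
  have h₂ : Ico (a + 1) (a + 1 + b) ⊆ range (a + 1 + b) := fun i hi => by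
    simp only [mem_Ico, mem_range] at hi ⊢; omega
  simp only [Pi.add_apply, sum_add_distrib, hsingle a _ (by omega) h₀,
    hsingle a _ (by omega) h₂, mem_range, mem_Ico, lt_self_iff_false, ↓reduceIte, add_zero,
    Pi.single_eq_same, add_tsub_cancel_right, add_le_iff_nonpos_right, nonpos_iff_eq_zero,
    one_ne_zero, false_and] at hfirst hsecond
  refine (coversOn_path_append hp ?_ ?_).of_pebblingReachable
    (pebblingReachable_move (hp.1 a (by omega)) k R)
  · simpa [sum_add_distrib, hsingle (a + 1) _ (by omega) h₁, sum_range_succ] using hfirst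
  · simp only [Pi.add_apply, sum_add_distrib, hsingle (a + 1) _ (by omega) h₂, mem_Ico, le_refl,
      true_and, lt_add_iff_pos_right, hb, if_true]
    omega

end Splitting

section Potential

variable {V : Type*} [Fintype V] [DecidableEq V] {G : SimpleGraph V} {φ : V → ℕ}

theorem PebblingStep.potential_le (hφ : ∀ u v, G.Adj u v → φ v ≤ φ u + 1) {D D' : V → ℕ}
    (h : PebblingStep G D D') : ∑ v, D' v * 2 ^ φ v ≤ ∑ v, D v * 2 ^ φ v := by
  obtain ⟨u, v, R, huv, rfl, rfl⟩ := pebblingStep_iff.1 h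
  simp only [Pi.add_apply, add_mul, sum_add_distrib, Pi.single_apply, ite_mul, zero_mul,
    sum_ite_eq', mem_univ, if_true, one_mul]
  have := Nat.pow_le_pow_right two_pos (hφ u v huv)
  rw [pow_succ] at this
  omega

theorem PebblingReachable.potential_le (hφ : ∀ u v, G.Adj u v → φ v ≤ φ u + 1)
    {D D' : V → ℕ} (h : PebblingReachable G D D') :
    ∑ v, D' v * 2 ^ φ v ≤ ∑ v, D v * 2 ^ φ v := by
  induction h with
  | refl => exact le_rfl
  | tail _ hstep ih => exact (hstep.potential_le hφ).trans ih

theorem sum_two_pow_le_of_forall_coverable (hφ : ∀ u v, G.Adj u v → φ v ≤ φ u + 1) {u : V}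
    (hu : φ u = 0) {N : ℕ} (hN : ∀ D : V → ℕ, ∑ v, D v = N → Coverable G D) :
    ∑ v, 2 ^ φ v ≤ N := by
  obtain ⟨D', hD', hcov⟩ := hN (Pi.single u N) (by simp)
  calc ∑ v, 2 ^ φ v ≤ ∑ v, D' v * 2 ^ φ v :=
        sum_le_sum fun v _ => Nat.le_mul_of_pos_left _ (hcov v)
    _ ≤ ∑ v, Pi.single u N v * 2 ^ φ v := PebblingReachable.potential_le hφ hD'
    _ = N := by simp [Pi.single_apply, ite_mul, hu]

end Potential

section Cycle

open scoped Fin.CommRing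

variable {n : ℕ} [NeZero n]

theorem cycleGraph_adj_add_one (hn : 2 ≤ n) (v : Fin n) :
    (cycleGraph n).Adj v (v + 1) := by
  obtain ⟨m, rfl⟩ : ∃ m, n = m + 2 := ⟨n - 2, by omega⟩
  exact cycleGraph_adj.2 (Or.inr (add_sub_cancel_left v 1))

theorem Fin.exists_lt_le_add_one {α : Type*} [LinearOrder α] (F : Fin n → α) {T : α}
    {z₀ z₁ : Fin n} (h₀ : F z₀ < T) (h₁ : T ≤ F z₁) : ∃ z, F z < T ∧ T ≤ F (z + 1) := by
  obtain ⟨i, hi, hi'⟩ := exists_lt_le_succ (fun i : ℕ => F (z₀ + (i : Fin n)))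
    (k := (z₁ - z₀).val) (by simpa using h₀) (by simpa using h₁)
  exact ⟨z₀ + (i : Fin n), hi, by simpa [add_assoc] using hi'⟩

theorem isPathSeq_cycleGraph (hn : 2 ≤ n) (z : Fin n) :
    IsPathSeq (cycleGraph n) (fun i : ℕ => z + (i : Fin n)) n := by
  refine ⟨fun i _ => by simpa [add_assoc] using cycleGraph_adj_add_one hn (z + (i : Fin n)),
    fun i hi j hj hij => ?_⟩
  have hcast : (i : Fin n) = j := add_left_cancel hij
  rw [Fin.ext_iff, Fin.val_cast_of_lt hi, Fin.val_cast_of_lt hj] at hcast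
  exact hcast

theorem image_add_natCast_Iio (z : Fin n) :
    (fun i : ℕ => z + (i : Fin n)) '' Set.Iio n = Set.univ :=
  Set.eq_univ_of_forall fun v => ⟨(v - z).val, (v - z).isLt, by simp⟩

def arcSum (D : Fin n → ℕ) (z : Fin n) (L : ℕ) : ℕ :=
  ∑ i ∈ range L, D (z + (i : Fin n))

theorem sum_Ico_eq_arcSum (D : Fin n → ℕ) (z : Fin n) (a b : ℕ) :
    ∑ i ∈ Ico a (a + b), D (z + (i : Fin n)) = arcSum D (z + (a : Fin n)) b := by
  rw [sum_Ico_eq_sum_range, add_tsub_cancel_left]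
  simp [arcSum, add_assoc]

theorem arcSum_add (D : Fin n → ℕ) (z : Fin n) (a b : ℕ) :
    arcSum D z (a + b) = arcSum D z a + arcSum D (z + (a : Fin n)) b := by
  rw [← sum_Ico_eq_arcSum, arcSum, arcSum, sum_range_add_sum_Ico _ (Nat.le_add_right a b)]

theorem arcSum_one (D : Fin n → ℕ) (z : Fin n) : arcSum D z 1 = D z := by
  simp [arcSum]

theorem arcSum_mono (D : Fin n → ℕ) (z : Fin n) {a b : ℕ} (h : a ≤ b) :
    arcSum D z a ≤ arcSum D z b :=
  sum_le_sum_of_subset (range_subset_range.2 h)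

theorem arcSum_self (D : Fin n → ℕ) (z : Fin n) : arcSum D z n = ∑ v, D v := by
  rw [arcSum, ← Fin.sum_univ_eq_sum_range (fun i => D (z + (i : Fin n)))]
  simpa using Fintype.sum_equiv (Equiv.addLeft z) _ _ fun _ => rfl

theorem coverable_of_coversOn_arc {D : Fin n → ℕ} (z : Fin n) {L : ℕ} (hL : n ≤ L)
    (h : CoversOn (cycleGraph n) D ((fun i : ℕ => z + (i : Fin n)) '' Set.Iio L)) :
    Coverable (cycleGraph n) D := by
  refine coverable_iff_coversOn_univ.2 (h.mono le_rfl ?_)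
  rw [← image_add_natCast_Iio z]
  exact Set.image_mono (Set.Iio_subset_Iio hL)

theorem coverable_cycleGraph_of_cut {r : ℕ} (hr : 1 ≤ r) (hrn : r < n) {D : Fin n → ℕ}
    {j : Fin n} (hlow : arcSum D j (r - 1) < 2 ^ r - 1)
    (hhigh : 2 ^ r - 1 ≤ arcSum D (j + 1) (r - 1))
    (htotal : ∑ v, D v = 2 ^ r + 2 ^ (n - r + 1) - 3) : Coverable (cycleGraph n) D := by
  obtain ⟨a, rfl⟩ : ∃ a, r = a + 1 := ⟨r - 1, by omega⟩
  have hlen : a + 1 + (n - (a + 1)) = n := by omega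
  refine coverable_of_coversOn_arc j hlen.ge ?_
  refine coversOn_path_of_cut ((isPathSeq_cycleGraph (by omega) j).mono hlen.le) (by omega)
    hlow.le ?_ ?_
  · have := arcSum_add D j 1 a
    rw [add_comm 1 a, arcSum_one] at this
    simp only [Nat.cast_one, add_tsub_cancel_right] at this hhigh
    change _ ≤ arcSum D j (a + 1)
    omega
  · change _ ≤ arcSum D j (a + 1 + (n - (a + 1))) + 3
    rw [hlen, arcSum_self, htotal]
    have : 1 ≤ 2 ^ (a + 1) := Nat.one_le_two_pow
    omega

theorem coverable_cycleGraph_of_large_arcs (hn : 2 ≤ n) {r : ℕ} (hr₁ : r - 1 ≤ n - r)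
    (hr₂ : n - r ≤ r) {D : Fin n → ℕ} (hD : ∀ z, 2 ^ r - 1 ≤ arcSum D z (r - 1)) :
    Coverable (cycleGraph n) D := by
  have hlen : r + (n - r) = n := by omega
  refine coverable_of_coversOn_arc 0 hlen.ge ?_
  have hpow₁ : 1 ≤ 2 ^ r := Nat.one_le_two_pow
  have hpow₂ : 2 ^ (n - r) ≤ 2 ^ r := Nat.pow_le_pow_right two_pos hr₂
  refine coversOn_path_append ((isPathSeq_cycleGraph hn 0).mono hlen.le) ?_ ?_
  · have := hD 0
    have := arcSum_mono D 0 (Nat.sub_le r 1)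
    change _ ≤ arcSum D 0 r + 1
    omega
  · rw [sum_Ico_eq_arcSum]
    have := hD (0 + (r : Fin n))
    have := arcSum_mono D (0 + (r : Fin n)) hr₁
    omega

theorem coverable_cycleGraph_of_small_arcs_odd {m : ℕ} (hm : n = 2 * m + 1) {D : Fin n → ℕ}
    (hD : ∀ z, arcSum D z m < 2 ^ (m + 1) - 1)
    (htotal : ∑ v, D v = 2 ^ (m + 1) + 2 ^ (m + 1) - 3) : Coverable (cycleGraph n) D := by
  refine coverable_iff_coversOn_univ.2 (coversOn_of_forall fun v _ => ?_)
  have hsplit : ∑ v, D v = D v + arcSum D (v + ((1 : ℕ) : Fin n)) m +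
      arcSum D (v + ((1 + m : ℕ) : Fin n)) m := by
    rw [← arcSum_self D v, ← arcSum_one D v, ← arcSum_add, ← arcSum_add,
      show 1 + m + m = n by omega]
  have h₁ := hD (v + ((1 : ℕ) : Fin n))
  have h₂ := hD (v + ((1 + m : ℕ) : Fin n))
  have hpow : 2 ≤ 2 ^ (m + 1) := Nat.le_self_pow (by omega) 2
  omega

theorem arcSum_add_arcSum_antipode {m : ℕ} (hm : m + m = n) (D : Fin n → ℕ) (z : Fin n) :
    arcSum D z m + arcSum D (z + (m : Fin n)) m = ∑ v, D v := by
  rw [← arcSum_add, hm, arcSum_self]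

theorem exists_arcSum_half_mem_Icc {m : ℕ} (hm : n = 2 * m) (hm₂ : 2 ≤ m) {D : Fin n → ℕ}
    (hD : ∀ z, arcSum D z (m - 1) < 2 ^ m - 1)
    (htotal : ∑ v, D v = 2 ^ m + 2 ^ (m + 1) - 3) :
    ∃ z, arcSum D z m ∈ Set.Icc (2 ^ m - 1) (2 ^ (m + 1) - 2) := by
  have hpow : 2 ^ 2 ≤ 2 ^ m := Nat.pow_le_pow_right two_pos hm₂
  have hanti := arcSum_add_arcSum_antipode (show m + m = n by omega) D
  rw [pow_succ] at htotal ⊢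
  -- rotating a half-cycle by one vertex adds at most one vertex of a light window
  have hstep (z : Fin n) : arcSum D (z + 1) m ≤ arcSum D z m + (2 ^ m - 2) := by
    have hsucc := arcSum_add D z m 1
    rw [add_comm m 1, arcSum_add, arcSum_one, arcSum_one, Nat.cast_one] at hsucc
    have := arcSum_mono D (z + (m : Fin n)) (show 1 ≤ m - 1 by omega)
    rw [arcSum_one] at this
    have := hD (z + (m : Fin n))
    omega
  by_cases h : ∃ z, arcSum D z m < 2 ^ m - 1
  · obtain ⟨z₀, hz₀⟩ := h
    obtain ⟨z, hz, hz'⟩ := Fin.exists_lt_le_add_one (arcSum D · m) hz₀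
      (z₁ := z₀ + (m : Fin n)) (by have := hanti z₀; omega)
    exact ⟨z + 1, hz', by have := hstep z; omega⟩
  · simp only [not_exists, not_lt] at h
    exact ⟨0, h 0, by have := hanti 0; have := h (0 + (m : Fin n)); omega⟩

theorem coverable_cycleGraph_of_small_arcs_even {m : ℕ} (hm : n = 2 * m) (hm₂ : 2 ≤ m)
    {D : Fin n → ℕ} (hD : ∀ z, arcSum D z (m - 1) < 2 ^ m - 1)
    (htotal : ∑ v, D v = 2 ^ m + 2 ^ (m + 1) - 3) : Coverable (cycleGraph n) D := by
  obtain ⟨z, hz₁, hz₂⟩ := exists_arcSum_half_mem_Icc hm hm₂ hD htotal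
  have hlen : m + m = n := by omega
  have hanti := arcSum_add_arcSum_antipode hlen D z
  refine coverable_of_coversOn_arc z hlen.ge
    (coversOn_path_append ((isPathSeq_cycleGraph (by omega) z).mono hlen.le) ?_ ?_)
  · change _ ≤ arcSum D z m + 1
    omega
  · rw [sum_Ico_eq_arcSum]
    rw [pow_succ] at hz₂ htotal
    omega

theorem coverable_cycleGraph (hn : 3 ≤ n) {D : Fin n → ℕ}
    (hD : ∑ v, D v = 2 ^ ((n + 1) / 2) + 2 ^ (n - (n + 1) / 2 + 1) - 3) :
    Coverable (cycleGraph n) D := by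
  set r := (n + 1) / 2 with hr
  by_cases hcut : (∃ z, arcSum D z (r - 1) < 2 ^ r - 1) ∧ ∃ z, 2 ^ r - 1 ≤ arcSum D z (r - 1)
  · obtain ⟨⟨z₀, h₀⟩, z₁, h₁⟩ := hcut
    obtain ⟨j, hj, hj'⟩ := Fin.exists_lt_le_add_one (arcSum D · (r - 1)) h₀ h₁
    exact coverable_cycleGraph_of_cut (by omega) (by omega) hj hj' hD
  rw [not_and_or, not_exists, not_exists] at hcut
  rcases hcut with hlarge | hsmall
  · exact coverable_cycleGraph_of_large_arcs (by omega) (by omega) (by omega)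
      fun z => not_lt.1 (hlarge z)
  obtain ⟨m, hm | hm⟩ := Nat.even_or_odd' n
  · have hrm : r = m := by omega
    rw [hrm, show n - m + 1 = m + 1 by omega] at hD
    exact coverable_cycleGraph_of_small_arcs_even hm (by omega)
      (fun z => by simpa [hrm] using not_le.1 (hsmall z)) hD
  · have hrm : r = m + 1 := by omega
    rw [hrm, show n - (m + 1) + 1 = m + 1 by omega] at hD
    exact coverable_cycleGraph_of_small_arcs_odd hm
      (fun z => by simpa [hrm] using not_le.1 (hsmall z)) hD

def cycleDist (v : Fin n) : ℕ :=
  min v.val (n - v.val)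

theorem cycleDist_add_one_le_and_le (v : Fin n) :
    cycleDist (v + 1) ≤ cycleDist v + 1 ∧ cycleDist v ≤ cycleDist (v + 1) + 1 := by
  obtain ⟨m, rfl⟩ : ∃ m, n = m + 1 := Nat.exists_eq_succ_of_ne_zero (NeZero.ne n)
  have hv := v.isLt
  simp only [cycleDist, Fin.val_add_one]
  split_ifs with hlast
  · subst hlast; simp
  · have : v.val ≠ m := fun h => hlast (Fin.ext h)
    omega

theorem cycleDist_le_of_adj (hn : 2 ≤ n) {u v : Fin n} (h : (cycleGraph n).Adj u v) :
    cycleDist v ≤ cycleDist u + 1 := by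
  obtain ⟨m, rfl⟩ : ∃ m, n = m + 2 := ⟨n - 2, by omega⟩
  rcases cycleGraph_adj.1 h with h | h
  · rw [sub_eq_iff_eq_add'] at h
    exact h ▸ (cycleDist_add_one_le_and_le v).2
  · rw [sub_eq_iff_eq_add'] at h
    exact h ▸ (cycleDist_add_one_le_and_le u).1

theorem sum_two_pow_cycleDist :
    ∑ v : Fin n, 2 ^ cycleDist v = 2 ^ ((n + 1) / 2) + 2 ^ (n - (n + 1) / 2 + 1) - 3 := by
  set r := (n + 1) / 2 with hr
  have hn : 0 < n := Nat.pos_of_ne_zero (NeZero.ne n)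
  simp only [cycleDist]
  rw [Fin.sum_univ_eq_sum_range (fun t => 2 ^ min t (n - t)),
    ← sum_range_add_sum_Ico _ (show r ≤ n by omega), sum_Ico_eq_sum_range]
  have hhead : ∑ t ∈ range r, 2 ^ min t (n - t) = 2 ^ r - 1 := by
    rw [← sum_range_two_pow]
    exact sum_congr rfl fun t ht => by rw [min_eq_left (by simp at ht; omega)]
  have htail : ∑ i ∈ range (n - r), 2 ^ min (r + i) (n - (r + i)) = 2 * (2 ^ (n - r) - 1) := by
    rw [← sum_range_two_pow, mul_sum, ← sum_range_reflect]
    refine sum_congr rfl fun i hi => ?_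
    simp only [mem_range] at hi
    rw [← pow_succ', min_eq_right (by omega)]
    congr 1
    omega
  have hpow : 1 ≤ 2 ^ (n - r) := Nat.one_le_two_pow
  have hpow' : 1 ≤ 2 ^ r := Nat.one_le_two_pow
  rw [hhead, htail, pow_succ]
  omega

end Cycle

theorem cycle_cover_pebbling (n : ℕ) (hn : 3 ≤ n) :
    coverPebblingNumber (cycleGraph n) = 2 ^ ((n + 1) / 2) + 2 ^ (n - (n + 1) / 2 + 1) - 3 := by
  have : NeZero n := ⟨by omega⟩
  refine IsLeast.csInf_eq ⟨fun D hD => coverable_cycleGraph hn hD, fun N hN => ?_⟩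
  rw [← sum_two_pow_cycleDist]
  exact sum_two_pow_le_of_forall_coverable (fun _ _ => cycleDist_le_of_adj (by omega))
    (u := 0) (by simp [cycleDist]) hN
end

section
/- Let P_m be a path with vertices V_1,...,V_m (m ≥ 2), let Q and K be integers with Q > K and Q ≥ g, and let D be a g-colored distribution of exactly Q(m-1) + 2^{m-1}·Q pebbles on P_m such that each of V_2,...,V_m carries at least Q pebbles and V_1 carries exactly K pebbles. Then there is a sequence of color-respecting pebbling steps after which every vertex V_1,...,V_m carries at least Q pebbles. -/
open SimpleGraph Finset

/-!
Number the vertices `0, …, m - 1` and let `n_t` be the number of pebbles on vertex `t`. Sweep the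
path from its far end: while at vertex `j + 1`, holding `Q + e` pebbles, move `⌊e/2⌋` pebbles to
vertex `j`. A vertex with more than `g` pebbles has two of the same color, so with `g ≤ Q` each
vertex passed keeps `Q` pebbles. The weight `W_j = ∑_{t ≤ j} 2^(j-t) n_t` satisfies
`W_{j+1} = 2 W_j + n_{j+1}`, so the invariant `Q·2^(j+1) ≤ W_j + Q` survives the move (parity
absorbs the rounding in `⌊e/2⌋`). At `j = 0` it says that vertex `0` holds `Q` pebbles, and at
`j = m - 1` it follows from the pebble count, since every weight is at least `1`.
-/

section ColorSteps

variable {V C : Type*} [DecidableEq V] [DecidableEq C] [Fintype C] {G : SimpleGraph V}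

def load (D : V → C → ℕ) (w : V) : ℕ := ∑ c, D w c

lemma QCoverable.of_reflTransGen {Q : ℕ} {D D' : V → C → ℕ}
    (h : Relation.ReflTransGen (ColorStep G) D D') (hD' : QCoverable G Q D') :
    QCoverable G Q D :=
  let ⟨D'', h', hcov⟩ := hD'
  ⟨D'', h.trans h', hcov⟩

lemma sum_add_eq_of_add_eq_of_eq_of_ne {f f' : C → ℕ} {a : ℕ} (c : C) (hc : f' c + a = f c)
    (h : ∀ d, d ≠ c → f' d = f d) : ∑ d, f' d + a = ∑ d, f d := by
  rw [Fintype.sum_eq_add_sum_compl c f', Fintype.sum_eq_add_sum_compl c f, ← hc,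
    sum_congr rfl fun d hd => h d (by simpa using hd)]
  ring

lemma exists_colorStep_of_card_lt_load {u v : V} (huv : G.Adj u v) {D : V → C → ℕ}
    (h : Fintype.card C < load D u) :
    ∃ D', ColorStep G D D' ∧ load D' u + 2 = load D u ∧ load D' v = load D v + 1 ∧
      ∀ w, w ≠ u → w ≠ v → load D' w = load D w := by
  obtain ⟨c, hc⟩ : ∃ c, 2 ≤ D u c := by
    by_contra! hle
    have : load D u ≤ Fintype.card C :=
      calc load D u ≤ ∑ _ : C, 1 := sum_le_sum fun c _ => Nat.le_of_lt_succ (hle c)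
        _ = Fintype.card C := by simp
    omega
  have hvu : v ≠ u := huv.ne.symm
  refine ⟨_, ⟨u, v, c, huv, hc, rfl⟩, ?_, ?_, fun w hwu hwv => ?_⟩
  · exact sum_add_eq_of_add_eq_of_eq_of_ne c (by simp; omega) fun d hd => by simp [hd]
  · exact (sum_add_eq_of_add_eq_of_eq_of_ne c (by simp [hvu]) fun d hd => by simp [hd]).symm
  · simp [load, hwu, hwv]

lemma exists_reflTransGen_transfer {u v : V} (huv : G.Adj u v) (M : ℕ) {D : V → C → ℕ}
    (h : Fintype.card C + 2 * M ≤ load D u) :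
    ∃ D', Relation.ReflTransGen (ColorStep G) D D' ∧ load D' u + 2 * M = load D u ∧
      load D' v = load D v + M ∧ ∀ w, w ≠ u → w ≠ v → load D' w = load D w := by
  induction M with
  | zero => exact ⟨D, .refl, rfl, rfl, fun _ _ _ => rfl⟩
  | succ M ih =>
    obtain ⟨D₁, h₁, hu₁, hv₁, hw₁⟩ := ih (by omega)
    obtain ⟨D₂, h₂, hu₂, hv₂, hw₂⟩ := exists_colorStep_of_card_lt_load huv (D := D₁) (by omega)
    refine ⟨D₂, h₁.tail h₂, by omega, by omega, fun w hwu hwv => ?_⟩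
    rw [hw₂ w hwu hwv, hw₁ w hwu hwv]

end ColorSteps

section PathWeight

def pathWeight (n : ℕ → ℕ) (j : ℕ) : ℕ := ∑ t ∈ range (j + 1), 2 ^ (j - t) * n t

lemma pathWeight_zero (n : ℕ → ℕ) : pathWeight n 0 = n 0 := by
  simp [pathWeight]

lemma pathWeight_succ (n : ℕ → ℕ) (j : ℕ) :
    pathWeight n (j + 1) = 2 * pathWeight n j + n (j + 1) := by
  rw [pathWeight, sum_range_succ, pathWeight, mul_sum, Nat.sub_self, pow_zero, one_mul]
  congr 1
  refine sum_congr rfl fun t ht => ?_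
  rw [mem_range] at ht
  rw [show j + 1 - t = j - t + 1 by omega, pow_succ]
  ring

lemma pathWeight_eq_add_of_eq_of_lt {n n' : ℕ → ℕ} {j M : ℕ} (h : ∀ t < j, n' t = n t)
    (hj : n' j = n j + M) : pathWeight n' j = pathWeight n j + M := by
  rw [pathWeight, pathWeight, sum_range_succ, sum_range_succ, Nat.sub_self, pow_zero, hj,
    sum_congr rfl fun t ht => by rw [h t (mem_range.mp ht)]]
  ring

lemma sum_range_add_le_pathWeight {n : ℕ → ℕ} {Q : ℕ} (j : ℕ)
    (h : ∀ t, 1 ≤ t → t ≤ j → Q ≤ n t) :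
    ∑ t ∈ range (j + 1), n t + 2 ^ j * Q ≤ pathWeight n j + (j + 1) * Q := by
  induction j with
  | zero => simp [pathWeight_zero]
  | succ j ih =>
    have hIH := ih fun t ht1 htj => h t ht1 (by omega)
    have hjQ : j * Q ≤ ∑ t ∈ range (j + 1), n t := by
      rw [sum_range_succ']
      have := card_nsmul_le_sum (range j) (fun t => n (t + 1)) Q
        fun t ht => h (t + 1) (by omega) (by simp at ht; omega)
      simp only [card_range, smul_eq_mul] at this
      omega
    rw [sum_range_succ, pathWeight_succ, pow_succ]
    nlinarith

end PathWeight

section Path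

variable {C : Type*} [Fintype C] {m : ℕ}

def pathLoad (D : Fin m → C → ℕ) (t : ℕ) : ℕ := if h : t < m then load D ⟨t, h⟩ else 0

lemma pathLoad_of_lt (D : Fin m → C → ℕ) {t : ℕ} (h : t < m) :
    pathLoad D t = load D ⟨t, h⟩ :=
  dif_pos h

lemma qCoverable_pathGraph_of_pathWeight [DecidableEq C] {Q : ℕ} (hC : Fintype.card C ≤ Q)
    (j : ℕ) (hj : j < m) (D : Fin m → C → ℕ) (hload : ∀ i : Fin m, i.val ≠ 0 → Q ≤ load D i)
    (hweight : Q * 2 ^ (j + 1) ≤ pathWeight (pathLoad D) j + Q) :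
    QCoverable (pathGraph m) Q D := by
  induction j generalizing D with
  | zero =>
    refine ⟨D, .refl, fun i => ?_⟩
    by_cases hi : i.val = 0
    · rw [pathWeight_zero, pathLoad_of_lt D hj] at hweight
      obtain rfl : i = ⟨0, hj⟩ := Fin.ext hi
      change Q ≤ load D _
      omega
    · exact hload i hi
  | succ j ih =>
    set u : Fin m := ⟨j + 1, hj⟩
    set v : Fin m := ⟨j, by omega⟩
    have huv : (pathGraph m).Adj u v := pathGraph_adj.mpr (Or.inr rfl)
    have hQu := hload u (by simp [u])
    set M := (load D u - Q) / 2
    obtain ⟨D', hDD', hu, hv, hw⟩ := exists_reflTransGen_transfer huv M (D := D) (by omega)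
    refine QCoverable.of_reflTransGen hDD' (ih (by omega) D' (fun i hi => ?_) ?_)
    · by_cases hiu : i = u
      · subst hiu; omega
      by_cases hiv : i = v
      · subst hiv; have := hload v hi; omega
      rw [hw i hiu hiv]
      exact hload i hi
    · have hweight' : pathWeight (pathLoad D') j = pathWeight (pathLoad D) j + M := by
        refine pathWeight_eq_add_of_eq_of_lt (fun t ht => ?_) ?_
        · rw [pathLoad_of_lt D' (by omega), pathLoad_of_lt D (by omega)]
          exact hw _ (by simp [u, Fin.ext_iff]; omega) (by simp [v, Fin.ext_iff]; omega)
        · rw [pathLoad_of_lt D' (by omega), pathLoad_of_lt D (by omega)]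
          exact hv
      rw [pathWeight_succ, show pathLoad D (j + 1) = load D u from pathLoad_of_lt D hj] at hweight
      have hpow : Q * 2 ^ (j + 1 + 1) = 2 * (Q * 2 ^ (j + 1)) := by ring
      omega

end Path

theorem path_cover_v1 (m g Q : ℕ) (hm : 2 ≤ m) (hgQ : g ≤ Q)
    (D : Fin m → Fin g → ℕ)
    (htot : ∑ i, ∑ c, D i c = Q * (m - 1) + 2 ^ (m - 1) * Q)
    (hmid : ∀ i : Fin m, i ≠ ⟨0, by omega⟩ → Q ≤ ∑ c, D i c) :
    QCoverable (pathGraph m) Q D := by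
  obtain ⟨k, rfl⟩ : ∃ k, m = k + 1 := ⟨m - 1, by omega⟩
  have hload : ∀ i : Fin (k + 1), i.val ≠ 0 → Q ≤ load D i :=
    fun i hi => hmid i (fun h => hi (by simp [h]))
  have hsum : ∑ t ∈ range (k + 1), pathLoad D t = Q * k + 2 ^ k * Q := by
    rw [Nat.add_sub_cancel] at htot
    rw [← Fin.sum_univ_eq_sum_range, ← htot]
    exact sum_congr rfl fun i _ => pathLoad_of_lt D i.isLt
  have hbound := sum_range_add_le_pathWeight (n := pathLoad D) (Q := Q) k
    fun t ht1 htk => by rw [pathLoad_of_lt D (by omega)]; exact hload _ (by simp; omega)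
  refine qCoverable_pathGraph_of_pathWeight (by simpa using hgQ) k (by omega) D hload ?_
  rw [pow_succ]
  nlinarith
end

section
/- Suppose G and H are good graphs. Then γ(G □ H) = γ(G)·γ(H) if and only if G □ H is good. -/
open SimpleGraph Finset

/-!
Weighting a pebble on `w` by `2 ^ dist u w`, a pebbling step never increases the total
weight, and a covering distribution has weight at least `σ(u) = ∑ w, 2 ^ dist u w`.
Putting all `γ(K)` pebbles on `u` gives weight `γ(K)`, so `σ(u) ≤ γ(K)` for every `u`
as soon as `γ(K) > 0`; for a good graph, `γ(K) = max_u σ(u)`.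
Distances in `G □ H` add, so `σ_{G □ H}(a, b) = σ_G(a) σ_H(b)`; both directions follow by
comparing the maxima.
-/

lemma two_pow_dist_le_two_mul_of_adj {V : Type*} {K : SimpleGraph V} (u : V) {x y : V}
    (hxy : K.Adj x y) : 2 ^ K.dist u y ≤ 2 * 2 ^ K.dist u x := by
  rw [← pow_succ']
  apply Nat.pow_le_pow_right two_pos
  rcases hxy.diff_dist_adj (u := u) with h | h | h <;> omega

section Weight

variable {V : Type*} [DecidableEq V] [Fintype V] {K : SimpleGraph V}

lemma PebblingStep.sum_mul_le {f : V → ℕ} (hf : ∀ x y, K.Adj x y → f y ≤ 2 * f x)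
    {D D' : V → ℕ} (h : PebblingStep K D D') :
    ∑ w, D' w * f w ≤ ∑ w, D w * f w := by
  obtain ⟨x, y, hxy, hx, rfl⟩ := h
  dsimp only
  have hne : x ≠ y := hxy.ne
  have pointwise : ∀ w, (if w = x then D x - 2 else if w = y then D y + 1 else D w) * f w
      + (if w = x then 2 * f x else 0) = D w * f w + (if w = y then f y else 0) := by
    intro w
    split_ifs with hwx hwy hwy
    · exact absurd (hwx.symm.trans hwy) hne
    · subst hwx
      rw [← add_mul, Nat.sub_add_cancel hx, add_zero]
    all_goals subst_vars; ring
  have total := Finset.sum_congr rfl fun w (_ : w ∈ univ) => pointwise w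
  simp only [sum_add_distrib, sum_ite_eq', mem_univ, if_true] at total
  have := hf x y hxy
  omega

lemma sum_mul_le_of_reflTransGen {f : V → ℕ} (hf : ∀ x y, K.Adj x y → f y ≤ 2 * f x)
    {D D' : V → ℕ} (h : Relation.ReflTransGen (PebblingStep K) D D') :
    ∑ w, D' w * f w ≤ ∑ w, D w * f w := by
  induction h with
  | refl => exact le_rfl
  | tail _ hstep ih => exact (hstep.sum_mul_le hf).trans ih

lemma sum_two_pow_dist_le_of_coverable {D : V → ℕ} (hD : Coverable K D) (u : V) :
    ∑ w, 2 ^ K.dist u w ≤ ∑ w, D w * 2 ^ K.dist u w := by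
  obtain ⟨D', hreach, hcover⟩ := hD
  calc ∑ w, 2 ^ K.dist u w ≤ ∑ w, D' w * 2 ^ K.dist u w :=
        sum_le_sum fun w _ => Nat.le_mul_of_pos_left _ (hcover w)
    _ ≤ ∑ w, D w * 2 ^ K.dist u w :=
        sum_mul_le_of_reflTransGen (fun _ _ => two_pow_dist_le_two_mul_of_adj u) hreach

lemma coverable_of_sum_eq_coverPebblingNumber (hK : 0 < coverPebblingNumber K)
    {D : V → ℕ} (hD : ∑ v, D v = coverPebblingNumber K) : Coverable K D :=
  Nat.sInf_mem (Nat.nonempty_of_pos_sInf hK) D hD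

lemma sum_two_pow_dist_le_coverPebblingNumber (hK : 0 < coverPebblingNumber K) (u : V) :
    ∑ w, 2 ^ K.dist u w ≤ coverPebblingNumber K := by
  let D : V → ℕ := fun v => if v = u then coverPebblingNumber K else 0
  have hD : Coverable K D := coverable_of_sum_eq_coverPebblingNumber hK (by simp [D])
  simpa [D, ite_mul] using sum_two_pow_dist_le_of_coverable hD u

lemma IsGood.coverPebblingNumber_pos (hK : IsGood K) : 0 < coverPebblingNumber K := by
  obtain ⟨a, ha⟩ := hK
  rw [ha]
  exact sum_pos (fun _ _ => by positivity) ⟨a, mem_univ a⟩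

lemma IsGood.sum_two_pow_dist_le (hK : IsGood K) (u : V) :
    ∑ w, 2 ^ K.dist u w ≤ coverPebblingNumber K :=
  sum_two_pow_dist_le_coverPebblingNumber hK.coverPebblingNumber_pos u

end Weight

section BoxProd

variable {Vg Vh : Type*} {G : SimpleGraph Vg} {H : SimpleGraph Vh}

lemma dist_boxProd (hG : G.Preconnected) (hH : H.Preconnected) (p q : Vg × Vh) :
    (G □ H).dist p q = G.dist p.1 q.1 + H.dist p.2 q.2 := by
  rw [SimpleGraph.dist, edist_boxProd, ENat.toNat_add (edist_ne_top_iff_reachable.2 (hG _ _))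
    (edist_ne_top_iff_reachable.2 (hH _ _))]
  rfl

lemma sum_two_pow_dist_boxProd [Fintype Vg] [Fintype Vh] (hG : G.Preconnected)
    (hH : H.Preconnected) (p : Vg × Vh) :
    ∑ q, 2 ^ (G □ H).dist p q = (∑ w, 2 ^ G.dist p.1 w) * ∑ x, 2 ^ H.dist p.2 x := by
  simp only [Fintype.sum_prod_type, sum_mul_sum, dist_boxProd hG hH, pow_add]

end BoxProd

theorem good_prod_iff {Vg Vh : Type*}
    [DecidableEq Vg] [Fintype Vg] [DecidableEq Vh] [Fintype Vh]
    (G : SimpleGraph Vg) (H : SimpleGraph Vh)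
    (hGc : G.Connected) (hHc : H.Connected) (hG : IsGood G) (hH : IsGood H) :
    coverPebblingNumber (G □ H) = coverPebblingNumber G * coverPebblingNumber H ↔
      IsGood (G □ H) := by
  have hσ := sum_two_pow_dist_boxProd hGc.preconnected hHc.preconnected
  have ⟨a, ha⟩ := hG
  have ⟨b, hb⟩ := hH
  constructor
  · intro h
    exact ⟨(a, b), by rw [h, ha, hb, hσ]⟩
  · intro hGH
    have ⟨p, hp⟩ := hGH
    apply le_antisymm
    · rw [hp, hσ]
      exact Nat.mul_le_mul (hG.sum_two_pow_dist_le p.1) (hH.sum_two_pow_dist_le p.2)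
    · rw [ha, hb, ← hσ (a, b)]
      exact hGH.sum_two_pow_dist_le (a, b)
end

section
/- The cover pebbling number of any finite Cartesian product of paths is the product of the individual cover pebbling numbers: γ(P_{n_1} □ ⋯ □ P_{n_k}) = ∏_{i=1}^k (2^{n_i} - 1). -/
open SimpleGraph Finset

/-- The Cartesian (box) product of a family of graphs. -/
def boxProdFamily {ι : Type*} [DecidableEq ι] {V : ι → Type*}
    (G : ∀ i, SimpleGraph (V i)) : SimpleGraph (∀ i, V i) where
  Adj a b := ∃ i, (G i).Adj (a i) (b i) ∧ ∀ j, j ≠ i → a j = b j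
  symm := by
    constructor
    rintro a b ⟨i, hadj, hrest⟩
    exact ⟨i, hadj.symm, fun j hj => (hrest j hj).symm⟩
  loopless := by
    constructor
    rintro a ⟨i, hadj, -⟩
    exact hadj.ne rfl

/-!
Lower bound: put all `N` pebbles on the corner `0`. The potential `∑ v, D v * 2 ^ (v₁ + ⋯ + vₖ)`
cannot increase along a pebbling step, since an edge changes the exponent by one; it starts at `N`
and a covering distribution has potential at least `∑ v, 2 ^ (v₁ + ⋯ + vₖ) = ∏ i, (2 ^ nᵢ - 1)`.

Upper bound, by induction on `k`: view the product as `P_m □ H`, i.e. `m` copies of `H`, and let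
`c = γ(H)`. A copy holding `c` pebbles can be covered inside itself, and since `|H| ≤ c + 1`, a
copy holding `c + 2` pebbles has a vertex with two of them, so a pebble can be moved to the
neighbouring copy. The copy totals therefore move like pebbles on `P_m` under steps that leave
at least `c` on their source, and `c * (2 ^ m - 1)` of those suffice to put `c` on every vertex
of `P_m`.
-/

section Step

variable {V : Type*} [DecidableEq V]

theorem step_add_ite_eq {D : V → ℕ} {u v : V} (huv : u ≠ v) (hu : 2 ≤ D u) (w : V) :
    (if w = u then D u - 2 else if w = v then D v + 1 else D w) + (if w = u then 2 else 0) =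
      D w + if w = v then 1 else 0 := by
  by_cases hwu : w = u
  · subst hwu; simp only [↓reduceIte, huv, add_zero]; omega
  · by_cases hwv : w = v
    · subst hwv; simp [hwu]
    · simp [hwu, hwv]

theorem PebblingStep.exists_sum_mul_add_eq {G : SimpleGraph V} [Fintype V] {D D' : V → ℕ}
    (h : PebblingStep G D D') (g : V → ℕ) :
    ∃ u v, G.Adj u v ∧ ∑ w, D' w * g w + 2 * g u = ∑ w, D w * g w + g v := by
  obtain ⟨u, v, huv, hu, rfl⟩ := h
  refine ⟨u, v, huv, ?_⟩
  have := Finset.sum_congr rfl fun w (_ : w ∈ univ) =>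
    congrArg (· * g w) (step_add_ite_eq huv.ne hu w)
  simpa [add_mul, Finset.sum_add_distrib, ite_mul] using this

end Step

section Lower

variable {V : Type*} [DecidableEq V] [Fintype V] {G : SimpleGraph V}

theorem PebblingStep.sum_mul_two_pow_le {f : V → ℕ} (hf : ∀ u v, G.Adj u v → f v ≤ f u + 1)
    {D D' : V → ℕ} (h : PebblingStep G D D') :
    ∑ w, D' w * 2 ^ f w ≤ ∑ w, D w * 2 ^ f w := by
  obtain ⟨u, v, huv, hsum⟩ := h.exists_sum_mul_add_eq (2 ^ f ·)
  have : 2 ^ f v ≤ 2 * 2 ^ f u := by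
    rw [← pow_succ']; exact Nat.pow_le_pow_right two_pos (hf u v huv)
  omega

theorem Relation.ReflTransGen.sum_mul_two_pow_le {f : V → ℕ}
    (hf : ∀ u v, G.Adj u v → f v ≤ f u + 1) {D D' : V → ℕ}
    (h : Relation.ReflTransGen (PebblingStep G) D D') :
    ∑ w, D' w * 2 ^ f w ≤ ∑ w, D w * 2 ^ f w := by
  induction h with
  | refl => rfl
  | tail _ hstep ih => exact (hstep.sum_mul_two_pow_le hf).trans ih

theorem sum_two_pow_le_of_coverable_single {f : V → ℕ}
    (hf : ∀ u v, G.Adj u v → f v ≤ f u + 1) {z : V} (hz : f z = 0) {N : ℕ}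
    (h : Coverable G (Pi.single z N)) : ∑ v, 2 ^ f v ≤ N := by
  obtain ⟨D, hreach, hcover⟩ := h
  calc ∑ v, 2 ^ f v ≤ ∑ w, D w * 2 ^ f w :=
        Finset.sum_le_sum fun v _ => Nat.le_mul_of_pos_left _ (hcover v)
    _ ≤ ∑ w, Pi.single z N w * 2 ^ f w := hreach.sum_mul_two_pow_le hf
    _ = N := by simp [Pi.single_apply, hz]

end Lower

section PathProduct

variable {k : ℕ} {n : Fin k → ℕ}

theorem boxProdFamily_pathGraph_sum_val_le {u v : ∀ i, Fin (n i)}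
    (h : (boxProdFamily fun i => pathGraph (n i)).Adj u v) :
    ∑ i, (v i : ℕ) ≤ ∑ i, (u i : ℕ) + 1 := by
  obtain ⟨i, hadj, hrest⟩ := h
  rw [← Finset.add_sum_erase _ _ (mem_univ i), ← Finset.add_sum_erase _ _ (mem_univ i),
    Finset.sum_congr rfl fun j hj => congrArg Fin.val (hrest j (ne_of_mem_erase hj))]
  rw [pathGraph_adj] at hadj
  omega

theorem sum_two_pow_sum_val (n : Fin k → ℕ) :
    ∑ v : ∀ i, Fin (n i), 2 ^ (∑ i, (v i : ℕ)) = ∏ i, (2 ^ n i - 1) := by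
  have geom (m : ℕ) : ∑ j : Fin m, 2 ^ (j : ℕ) = 2 ^ m - 1 := by
    rw [Fin.sum_univ_eq_sum_range, Nat.geomSum_eq le_rfl]; simp
  simp only [← Finset.prod_pow_eq_pow_sum, ← geom, Fintype.prod_sum]

end PathProduct

section Above

variable {α : Type*} [DecidableEq α]

def PebblingStepAbove (G : SimpleGraph α) (c : ℕ) (L L' : α → ℕ) : Prop :=
  ∃ u v, G.Adj u v ∧ c + 2 ≤ L u ∧
    L' = fun w => if w = u then L u - 2 else if w = v then L v + 1 else L w

variable {G : SimpleGraph α} {c : ℕ}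

theorem reflTransGen_pebblingStepAbove_push {L : α → ℕ} {u v : α} (huv : G.Adj u v) {k : ℕ}
    (h : c + 2 * k ≤ L u) :
    Relation.ReflTransGen (PebblingStepAbove G c) L
      (fun w => if w = u then L u - 2 * k else if w = v then L v + k else L w) := by
  induction k with
  | zero =>
    convert Relation.ReflTransGen.refl using 1
    funext w
    split_ifs <;> simp_all
  | succ k ih =>
    refine (ih (by omega)).tail ⟨u, v, huv, by simp only [↓reduceIte]; omega, ?_⟩
    funext w
    have := huv.ne
    split_ifs <;> simp_all <;> omega

end Above

section Path

variable {m : ℕ}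

def PrefixCover (c p s : ℕ) (L : Fin m → ℕ) : Prop :=
  ∃ L', Relation.ReflTransGen (PebblingStepAbove (pathGraph m) c) L L' ∧
    (∀ t : Fin m, ↑t < p → c ≤ L' t) ∧ ∀ t : Fin m, p ≤ ↑t → L' t = L t + if ↑t = p then s else 0

variable {c : ℕ}

theorem pathGraph_push {L : Fin m → ℕ} {u : Fin m} {q k : ℕ}
    (hq : 0 < k → q < m ∧ ((u : ℕ) + 1 = q ∨ q + 1 = u)) (h : c + 2 * k ≤ L u) :
    ∃ L', Relation.ReflTransGen (PebblingStepAbove (pathGraph m) c) L L' ∧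
      L' u + 2 * k = L u ∧ ∀ t ≠ u, L' t = L t + if (t : ℕ) = q then k else 0 := by
  rcases k.eq_zero_or_pos with rfl | hk
  · exact ⟨L, .refl, rfl, fun t _ => by simp⟩
  obtain ⟨hqm, hadj⟩ := hq hk
  refine ⟨_, reflTransGen_pebblingStepAbove_push (v := ⟨q, hqm⟩) (pathGraph_adj.2 hadj) h,
    by simp only [↓reduceIte]; omega, fun t ht => ?_⟩
  by_cases htq : (t : ℕ) = q
  · obtain rfl : t = ⟨q, hqm⟩ := Fin.ext htq
    simp [ht]
  · simp [ht, htq, Fin.ext_iff]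

theorem sum_filter_val_lt_succ (L : Fin m → ℕ) (u : Fin m) :
    ∑ t : Fin m with t.val < u.val + 1, L t = ∑ t : Fin m with t.val < u.val, L t + L u := by
  rw [add_comm (∑ t : Fin m with t.val < u.val, L t), ← Finset.sum_insert (by simp)]
  congr 1
  ext t
  simp only [Order.lt_add_one_iff, Fin.val_fin_le, mem_filter, mem_univ, true_and, Fin.val_fin_lt,
    mem_insert, Fin.ext_iff]
  omega

theorem sum_filter_val_lt_ite_eq (k : ℕ) {p q : ℕ} (hqp : q < p) (hp : p ≤ m) :
    ∑ t : Fin m with t.val < p, (if (t : ℕ) = q then k else 0) = k := by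
  have : ∀ t : Fin m, (t : ℕ) = q ↔ t = ⟨q, by omega⟩ := fun _ => by
    simp [Fin.ext_iff]
  simp [this, hqp]

theorem PrefixCover.succ {u : Fin m} {L L₀ : Fin m → ℕ}
    (h₀ : Relation.ReflTransGen (PebblingStepAbove (pathGraph m) c) L L₀)
    (hL₀ : ∀ t, u < t → L₀ t = L t) {r s : ℕ} (hr : c + 2 * s ≤ L₀ u + r)
    (hs : 0 < s → ↑u + 1 < m) (h : PrefixCover c u r L₀) : PrefixCover c (u + 1) s L := by
  obtain ⟨L₁, h₁, hcov₁, hrest₁⟩ := h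
  have hu₁ : c + 2 * s ≤ L₁ u := by simpa [hrest₁ u le_rfl] using hr
  obtain ⟨L₂, h₂, hu₂, hrest₂⟩ :=
    pathGraph_push (q := u + 1) (fun hs' => ⟨hs hs', Or.inl rfl⟩) hu₁
  refine ⟨L₂, h₀.trans (h₁.trans h₂), fun t ht => ?_, fun t ht => ?_⟩
  · by_cases htu : t = u
    · subst htu; omega
    · rw [hrest₂ t htu, if_neg (by omega)]
      exact le_add_right (hcov₁ t (by simp only [Fin.ext_iff] at htu; omega))
  · have htu : u < t := Fin.lt_def.2 (by omega)
    rw [hrest₂ t htu.ne', hrest₁ t htu.le, if_neg (Fin.val_ne_of_ne htu.ne'), add_zero, hL₀ t htu]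

-- If vertex `u` can spare `c + 2 * s`, it first makes up the shortfall of the vertices below it;
-- otherwise those vertices cover themselves and send `u` what it lacks.
theorem PrefixCover.succ_of_le {u : Fin m} (ih : ∀ s, (0 < s → ↑u < m) → ∀ L : Fin m → ℕ,
      c * (2 ^ (u : ℕ) - 1) + 2 ^ (u : ℕ) * s ≤ ∑ t : Fin m with t.val < u.val, L t →
      PrefixCover c u s L)
    {s : ℕ} (hs : 0 < s → ↑u + 1 < m) {L : Fin m → ℕ}
    (hL : c * (2 ^ (u + 1 : ℕ) - 1) + 2 ^ (u + 1 : ℕ) * s ≤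
      ∑ t : Fin m with t.val < u.val + 1, L t)
    (hT : c + 2 * s ≤ L u) : PrefixCover c (u + 1) s L := by
  obtain ⟨P, hP⟩ : ∃ P, 2 ^ (u : ℕ) = P + 1 :=
    ⟨_, (Nat.succ_pred_eq_of_pos (Nat.two_pow_pos _)).symm⟩
  rw [sum_filter_val_lt_succ, pow_succ, hP, show (P + 1) * 2 - 1 = 2 * P + 1 by omega] at hL
  replace hL : 2 * (c * P) + c + 2 * (P * s) + 2 * s ≤
      ∑ t : Fin m with t.val < u.val, L t + L u := by linarith
  rw [hP, Nat.add_sub_cancel] at ih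
  set d := c * P - ∑ t : Fin m with t.val < u.val, L t
  have hd : 0 < d → 0 < (u : ℕ) := fun hd => Nat.pos_of_ne_zero fun h0 => by
    obtain rfl : P = 0 := by simpa [h0] using hP
    simp [d] at hd
  obtain ⟨L₀, h₀, hu₀, hrest₀⟩ := pathGraph_push (q := u - 1)
    (fun h => ⟨by omega, Or.inr (by have := hd h; omega)⟩) (show c + 2 * d ≤ L u by omega)
  have hsum₀ : ∑ t : Fin m with t.val < u.val, L₀ t =
      ∑ t : Fin m with t.val < u.val, L t + d := by
    rw [Finset.sum_congr rfl fun t ht => hrest₀ t (Fin.ne_of_lt (by simpa using ht)),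
      Finset.sum_add_distrib]
    rcases d.eq_zero_or_pos with h | h
    · simp [h]
    · rw [sum_filter_val_lt_ite_eq d (by omega) u.isLt.le]
  refine .succ h₀ (fun t ht => ?_) (r := 0) (by omega) hs (ih 0 (by simp) L₀ (by omega))
  rw [hrest₀ t ht.ne', if_neg (by have := Fin.lt_def.1 ht; omega), add_zero]

theorem PrefixCover.succ_of_lt {u : Fin m} (ih : ∀ s, (0 < s → ↑u < m) → ∀ L : Fin m → ℕ,
      c * (2 ^ (u : ℕ) - 1) + 2 ^ (u : ℕ) * s ≤ ∑ t : Fin m with t.val < u.val, L t →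
      PrefixCover c u s L)
    {s : ℕ} (hs : 0 < s → ↑u + 1 < m) {L : Fin m → ℕ}
    (hL : c * (2 ^ (u + 1 : ℕ) - 1) + 2 ^ (u + 1 : ℕ) * s ≤
      ∑ t : Fin m with t.val < u.val + 1, L t)
    (hT : L u < c + 2 * s) : PrefixCover c (u + 1) s L := by
  obtain ⟨P, hP⟩ : ∃ P, 2 ^ (u : ℕ) = P + 1 :=
    ⟨_, (Nat.succ_pred_eq_of_pos (Nat.two_pow_pos _)).symm⟩
  rw [sum_filter_val_lt_succ, pow_succ, hP, show (P + 1) * 2 - 1 = 2 * P + 1 by omega] at hL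
  rw [hP, Nat.add_sub_cancel] at ih
  set r := c + 2 * s - L u
  have hrT : r + L u = c + 2 * s := by omega
  have hPr : P * r + P * L u = c * P + 2 * (P * s) := by rw [← mul_add, hrT]; ring
  exact .succ .refl (fun _ _ => rfl) (by omega) hs
    (ih r (fun _ => u.isLt) L (by linarith [Nat.zero_le (P * L u)]))

theorem prefixCover (p : ℕ) (hp : p ≤ m) (s : ℕ) (hs : 0 < s → p < m)
    (L : Fin m → ℕ) (hL : c * (2 ^ p - 1) + 2 ^ p * s ≤ ∑ t : Fin m with t.val < p, L t) :
    PrefixCover c p s L := by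
  induction p generalizing s L with
  | zero =>
    obtain rfl : s = 0 := by simpa using hL
    exact ⟨L, .refl, fun t ht => absurd ht (Nat.not_lt_zero _), fun t _ => by simp⟩
  | succ p ih =>
    obtain ⟨u, rfl⟩ : ∃ u : Fin m, ↑u = p := ⟨⟨p, hp⟩, rfl⟩
    by_cases hT : c + 2 * s ≤ L u
    · exact PrefixCover.succ_of_le (ih u.isLt.le) hs hL hT
    · exact PrefixCover.succ_of_lt (ih u.isLt.le) hs hL (not_le.1 hT)

theorem pathGraph_exists_cover (L : Fin m → ℕ) (hL : c * (2 ^ m - 1) ≤ ∑ t, L t) :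
    ∃ L', Relation.ReflTransGen (PebblingStepAbove (pathGraph m) c) L L' ∧ ∀ t, c ≤ L' t := by
  obtain ⟨L', h, hcov, -⟩ := prefixCover m le_rfl 0 (by simp) L (by simpa using hL)
  exact ⟨L', h, fun t => hcov t t.isLt⟩

end Path

section BoxProd

variable {α β : Type*} [DecidableEq α] [DecidableEq β] {G : SimpleGraph α} {H : SimpleGraph β}

theorem PebblingStep.boxProd_fiber (D : α × β → ℕ) (a : α) {E E' : β → ℕ}
    (h : PebblingStep H E E') :
    PebblingStep (G.boxProd H) (fun x => if x.1 = a then E x.2 else D x)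
      (fun x => if x.1 = a then E' x.2 else D x) := by
  obtain ⟨u, v, huv, hu, rfl⟩ := h
  refine ⟨(a, u), (a, v), boxProd_adj_right.2 huv, by simpa using hu, ?_⟩
  funext ⟨x, y⟩
  by_cases hx : x = a
  · subst hx; simp
  · simp [hx]

theorem reflTransGen_boxProd_fiber {D : α × β → ℕ} {a : α} {E : β → ℕ}
    (h : Relation.ReflTransGen (PebblingStep H) (fun b => D (a, b)) E) :
    Relation.ReflTransGen (PebblingStep (G.boxProd H)) D
      (fun x => if x.1 = a then E x.2 else D x) := by
  have := h.lift _ fun _ _ hstep => hstep.boxProd_fiber (G := G) D a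
  convert this using 1
  funext x
  by_cases hx : x.1 = a
  · obtain ⟨x, y⟩ := x
    subst hx
    simp
  · simp [hx]

theorem reflTransGen_boxProd_of_forall_fiber [Fintype α] {D : α × β → ℕ} {E : α → β → ℕ}
    (h : ∀ a, Relation.ReflTransGen (PebblingStep H) (fun b => D (a, b)) (E a)) :
    Relation.ReflTransGen (PebblingStep (G.boxProd H)) D (fun x => E x.1 x.2) := by
  suffices ∀ s : Finset α, Relation.ReflTransGen (PebblingStep (G.boxProd H)) D
      (fun x => if x.1 ∈ s then E x.1 x.2 else D x) by simpa using this univ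
  intro s
  induction s using Finset.induction_on with
  | empty => simpa using .refl
  | insert a s ha ih =>
    refine ih.trans ?_
    convert reflTransGen_boxProd_fiber (D := fun x => if x.1 ∈ s then E x.1 x.2 else D x)
      (a := a) (E := E a) (by simpa [ha] using h a) using 2 with x
    by_cases hx : x.1 = a <;> simp [hx]

theorem coverable_boxProd_of_forall_fiber [Fintype α] {D : α × β → ℕ}
    (h : ∀ a, Coverable H (fun b => D (a, b))) : Coverable (G.boxProd H) D := by
  choose E hE hcov using h
  exact ⟨_, reflTransGen_boxProd_of_forall_fiber hE, fun x => hcov x.1 x.2⟩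

theorem PebblingStepAbove.exists_pebblingStep_boxProd [Fintype β] {c : ℕ}
    (hβ : Fintype.card β ≤ c + 1) {D : α × β → ℕ} {L' : α → ℕ}
    (h : PebblingStepAbove G c (fun a => ∑ b, D (a, b)) L') :
    ∃ D', PebblingStep (G.boxProd H) D D' ∧ (fun a => ∑ b, D' (a, b)) = L' := by
  obtain ⟨u, v, huv, hu, rfl⟩ := h
  beta_reduce at hu
  obtain ⟨b, -, hb⟩ : ∃ b ∈ univ, 1 < D (u, b) :=
    Finset.exists_lt_of_sum_lt (by simp only [sum_const, card_univ, smul_eq_mul, mul_one]; omega)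
  refine ⟨_, ⟨(u, b), (v, b), boxProd_adj_left.2 huv, hb, rfl⟩, ?_⟩
  funext a
  have := Finset.sum_congr rfl fun y (_ : y ∈ univ) =>
    step_add_ite_eq (u := (u, b)) (v := (v, b)) (by simp [huv.ne]) hb (a, y)
  rw [Finset.sum_add_distrib, Finset.sum_add_distrib] at this
  beta_reduce
  split_ifs with hau hav
  · subst hau
    simp only [Prod.mk.injEq, true_and, huv.ne, false_and, ↓reduceIte, sum_ite_eq', mem_univ,
      sum_const_zero, add_zero] at this ⊢
    omega
  · subst hav
    simp only [Prod.mk.injEq, huv.ne', false_and, ↓reduceIte, true_and, sum_const_zero, add_zero,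
      sum_ite_eq', mem_univ] at this ⊢
    omega
  · simp only [Prod.mk.injEq, hau, false_and, ↓reduceIte, hav]

theorem exists_reflTransGen_boxProd_of_above [Fintype β] {c : ℕ}
    (hβ : Fintype.card β ≤ c + 1) {D : α × β → ℕ} {L' : α → ℕ}
    (h : Relation.ReflTransGen (PebblingStepAbove G c) (fun a => ∑ b, D (a, b)) L') :
    ∃ D', Relation.ReflTransGen (PebblingStep (G.boxProd H)) D D' ∧
      (fun a => ∑ b, D' (a, b)) = L' := by
  induction h with
  | refl => exact ⟨D, .refl, rfl⟩
  | tail _ hstep ih =>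
    obtain ⟨D₁, h₁, rfl⟩ := ih
    obtain ⟨D₂, h₂, rfl⟩ := hstep.exists_pebblingStep_boxProd hβ
    exact ⟨D₂, h₁.tail h₂, rfl⟩

theorem coverable_boxProd_of_above [Fintype α] [Fintype β] {c : ℕ}
    (hβ : Fintype.card β ≤ c + 1) (hH : ∀ E : β → ℕ, c ≤ ∑ b, E b → Coverable H E)
    {D : α × β → ℕ} {L' : α → ℕ}
    (h : Relation.ReflTransGen (PebblingStepAbove G c) (fun a => ∑ b, D (a, b)) L')
    (hL' : ∀ a, c ≤ L' a) : Coverable (G.boxProd H) D := by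
  obtain ⟨D', h', rfl⟩ := exists_reflTransGen_boxProd_of_above hβ h
  obtain ⟨D'', h'', hcov⟩ := coverable_boxProd_of_forall_fiber (G := G) fun a => hH _ (hL' a)
  exact ⟨D'', h'.trans h'', hcov⟩

theorem coverable_pathGraph_boxProd [Fintype β] {c : ℕ}
    (hβ : Fintype.card β ≤ c + 1) (hH : ∀ E : β → ℕ, c ≤ ∑ b, E b → Coverable H E)
    {m : ℕ} {D : Fin m × β → ℕ} (hD : c * (2 ^ m - 1) ≤ ∑ x, D x) :
    Coverable ((pathGraph m).boxProd H) D := by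
  obtain ⟨L', h, hL'⟩ := pathGraph_exists_cover (fun a => ∑ b, D (a, b))
    (by rwa [← Fintype.sum_prod_type'])
  exact coverable_boxProd_of_above hβ hH h hL'

end BoxProd

section Iso

variable {V W : Type*} [DecidableEq V] [DecidableEq W] {G : SimpleGraph V} {G' : SimpleGraph W}

theorem PebblingStep.map_iso (φ : G ≃g G') {D D' : V → ℕ} (h : PebblingStep G D D') :
    PebblingStep G' (D ∘ φ.symm) (D' ∘ φ.symm) := by
  obtain ⟨u, v, huv, hu, rfl⟩ := h
  refine ⟨φ u, φ v, φ.map_adj_iff.2 huv, by simpa using hu, ?_⟩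
  funext w
  simp [RelIso.symm_apply_eq]

theorem Coverable.of_iso (φ : G ≃g G') {D : W → ℕ} (h : Coverable G (D ∘ φ)) :
    Coverable G' D := by
  obtain ⟨D', hreach, hcover⟩ := h
  refine ⟨D' ∘ φ.symm, ?_, fun w => hcover _⟩
  have := hreach.lift (· ∘ φ.symm) fun _ _ hstep => hstep.map_iso φ
  simpa [Function.onFun, Function.comp_def] using this

def boxProdFamilyConsIso {k : ℕ} {V : Fin (k + 1) → Type*} (G : ∀ i, SimpleGraph (V i)) :
    (G 0).boxProd (boxProdFamily fun i : Fin k => G i.succ) ≃g boxProdFamily G where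
  toEquiv := Fin.consEquiv V
  map_rel_iff' := by
    rintro ⟨a, x⟩ ⟨b, y⟩
    simp [boxProdFamily, Fin.exists_fin_succ, Fin.forall_fin_succ, funext_iff,
      (Fin.succ_ne_zero _).symm, and_left_comm (b := a = b), exists_and_left, and_comm (b := a = b)]

end Iso

theorem coverable_boxProdFamily_pathGraph {k : ℕ} (n : Fin k → ℕ) (D : (∀ i, Fin (n i)) → ℕ)
    (hD : ∏ i, (2 ^ n i - 1) ≤ ∑ v, D v) :
    Coverable (boxProdFamily fun i => pathGraph (n i)) D := by
  induction k with
  | zero =>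
    refine ⟨D, .refl, fun v => ?_⟩
    simpa [Fintype.sum_unique, Subsingleton.elim v default] using hD
  | succ k ih =>
    have hcard : Fintype.card (∀ i : Fin k, Fin (n i.succ)) ≤ ∏ i : Fin k, (2 ^ n i.succ - 1) := by
      simp only [Fintype.card_pi, Fintype.card_fin]
      exact Finset.prod_le_prod' fun i _ => Nat.le_sub_one_of_lt (Nat.lt_two_pow_self)
    refine Coverable.of_iso (boxProdFamilyConsIso _) (coverable_pathGraph_boxProd
      (hcard.trans (Nat.le_succ _)) (fun E hE => ih _ E hE) ?_)
    rw [Fin.prod_univ_succ, mul_comm] at hD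
    exact hD.trans ((Fin.consEquiv fun i => Fin (n i)).sum_comp D).ge

theorem cover_pebbling_prod_paths (k : ℕ) (n : Fin k → ℕ) (hn : ∀ i, 1 ≤ n i) :
    coverPebblingNumber (boxProdFamily fun i => pathGraph (n i)) =
      ∏ i, (2 ^ n i - 1) := by
  have hmem : ∏ i, (2 ^ n i - 1) ∈ {N | ∀ D : (∀ i, Fin (n i)) → ℕ, ∑ v, D v = N →
      Coverable (boxProdFamily fun i => pathGraph (n i)) D} :=
    fun D hD => coverable_boxProdFamily_pathGraph n D hD.ge
  refine le_antisymm (Nat.sInf_le hmem) (le_csInf ⟨_, hmem⟩ fun N hN => ?_)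
  rw [← sum_two_pow_sum_val]
  exact sum_two_pow_le_of_coverable_single (fun _ _ => boxProdFamily_pathGraph_sum_val_le)
    (z := fun i => ⟨0, hn i⟩) (by simp) (hN _ (by simp))
end

section
/- For any connected graph G, any simple distribution supported on a single vertex u of G requires exactly Σ_{w ∈ V(G)} 2^{dist(u,w)} pebbles to cover G; that is, this is the minimum number N such that every placement of N pebbles all on u is coverable, and N-1 pebbles on u do not suffice. -/
open SimpleGraph Finset

section Aux
variable {V : Type*} [DecidableEq V] (G : SimpleGraph V)

/-- Repeated single-edge moves. -/
lemma repeat_step {a b : V} (hab : G.Adj a b) :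
    ∀ (m : ℕ) (D : V → ℕ), 2 * m ≤ D a →
      Relation.ReflTransGen (PebblingStep G) D
        (fun w => if w = a then D a - 2 * m else if w = b then D b + m else D w) := by
  intro m
  induction m with
  | zero =>
    intro D _
    have : (fun w => if w = a then D a - 2 * 0 else if w = b then D b + 0 else D w) = D := by
      funext w; split_ifs with h1 h2 <;> simp_all
    rw [this]
  | succ m ih =>
    intro D hD
    have hne : a ≠ b := hab.ne
    set D1 : V → ℕ := fun w => if w = a then D a - 2 else if w = b then D b + 1 else D w with hD1
    have step1 : PebblingStep G D D1 := ⟨a, b, hab, by omega, rfl⟩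
    have h1a : D1 a = D a - 2 := by simp [hD1]
    have h1b : D1 b = D b + 1 := by simp [hD1, hne.symm]
    have h2 : 2 * m ≤ D1 a := by omega
    have tail := ih D1 h2
    have : (fun w => if w = a then D1 a - 2 * m else if w = b then D1 b + m else D1 w)
        = (fun w => if w = a then D a - 2 * (m + 1) else if w = b then D b + (m + 1) else D w) := by
      funext w
      by_cases hwa : w = a
      · subst hwa; simp [hne, h1a]; omega
      · by_cases hwb : w = b
        · subst hwb; simp [hne.symm, hwa, h1b]; omega
        · simp [hwa, hwb, hD1]
    rw [this] at tail
    exact Relation.ReflTransGen.head step1 tail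
end Aux

section Aux2
variable {V : Type*} [DecidableEq V] {G : SimpleGraph V}

/-- Transfer `m` pebbles from `u` to `x` at distance `k+1`, cost `m * 2^(k+1)`. -/
lemma transfer (hG : G.Connected) (u : V) :
    ∀ (k : ℕ) (x : V), G.dist u x = k + 1 → ∀ (D : V → ℕ) (m : ℕ), m * 2 ^ (k + 1) ≤ D u →
      Relation.ReflTransGen (PebblingStep G) D
        (fun w => if w = u then D u - m * 2 ^ (k + 1) else if w = x then D x + m else D w) := by
  intro k
  induction k with
  | zero =>
    intro x hx D m hD
    have hadj : G.Adj u x := by rwa [SimpleGraph.dist_eq_one_iff_adj] at hx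
    have := repeat_step G hadj m D (by simpa [two_mul, mul_comm] using hD)
    convert this using 2
    ring_nf
  | succ k ih =>
    intro x hx D m hD
    -- find y adjacent to x with dist u y = k + 1
    obtain ⟨r, hr⟩ : ∃ r : G.Walk x u, r.length = G.dist x u :=
      (hG x u).exists_walk_length_eq_dist
    have hxu : G.dist x u = k + 2 := by rwa [SimpleGraph.dist_comm] at hx
    obtain ⟨y, hadj, q⟩ : ∃ y, G.Adj x y ∧ ∃ q : G.Walk y u, q.length = k + 1 := by
      cases r with
      | nil => rw [hxu] at hr; simp at hr
      | cons h q =>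
        rw [hxu] at hr
        exact ⟨_, h, q, by simpa using hr⟩
    obtain ⟨q, hq⟩ := q
    have hyu_le : G.dist u y ≤ k + 1 := by
      rw [SimpleGraph.dist_comm]; exact hq ▸ SimpleGraph.dist_le q
    have hyu_ge : k + 1 ≤ G.dist u y := by
      have ht := hG.dist_triangle (u := u) (v := y) (w := x)
      have : G.dist y x ≤ 1 := le_of_eq (SimpleGraph.dist_eq_one_iff_adj.mpr hadj.symm)
      omega
    have hyu : G.dist u y = k + 1 := le_antisymm hyu_le hyu_ge
    have hyx : y ≠ x := by intro h; rw [h, hx] at hyu; omega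
    have hux : u ≠ x := by intro h; rw [← h, SimpleGraph.dist_self] at hx; omega
    have huy : u ≠ y := by intro h; rw [← h, SimpleGraph.dist_self] at hyu; omega
    -- move 2m pebbles to y
    have h1 : (2 * m) * 2 ^ (k + 1) ≤ D u := by
      have : (2 * m) * 2 ^ (k + 1) = m * 2 ^ (k + 1 + 1) := by ring
      omega
    have t1 := ih y hyu D (2 * m) h1
    set D1 : V → ℕ := fun w => if w = u then D u - 2 * m * 2 ^ (k + 1)
      else if w = y then D y + 2 * m else D w with hD1
    have h1y : D1 y = D y + 2 * m := by simp [hD1, huy.symm]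
    have h2 : 2 * m ≤ D1 y := by omega
    have t2 := repeat_step G hadj.symm m D1 h2
    have heq : (fun w => if w = y then D1 y - 2 * m else if w = x then D1 x + m else D1 w)
        = (fun w => if w = u then D u - m * 2 ^ (k + 1 + 1) else if w = x then D x + m else D w) := by
      funext w
      have hpow : 2 * m * 2 ^ (k + 1) = m * 2 ^ (k + 1 + 1) := by ring
      by_cases hwy : w = y
      · subst hwy; simp [hyx, huy.symm, h1y]
      · by_cases hwx : w = x
        · subst hwx; simp [hyx, hux.symm, hD1, hyx.symm]
        · by_cases hwu : w = u
          · subst hwu; simp [huy, hux, hD1, hpow]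
          · simp [hwy, hwx, hwu, hD1]
    rw [heq] at t2
    exact t1.trans t2

/-- Cover a set of vertices not containing `u`. -/
lemma cover_set (hG : G.Connected) (u : V) (S : Finset V) (hu : u ∉ S) :
    ∀ D : V → ℕ, (∑ x ∈ S, 2 ^ G.dist u x) ≤ D u →
      ∃ D', Relation.ReflTransGen (PebblingStep G) D D' ∧
        D' u = D u - ∑ x ∈ S, 2 ^ G.dist u x ∧
        (∀ x ∈ S, D' x = D x + 1) ∧ (∀ w, w ∉ S → w ≠ u → D' w = D w) := by
  induction S using Finset.induction with
  | empty => intro D _; exact ⟨D, Relation.ReflTransGen.refl, by simp, by simp, by simp⟩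
  | @insert a S ha ih =>
    intro D hD
    have hau : a ≠ u := fun h => hu (h ▸ Finset.mem_insert_self a S)
    have huS : u ∉ S := fun h => hu (Finset.mem_insert_of_mem h)
    rw [Finset.sum_insert ha] at hD
    obtain ⟨k, hk⟩ : ∃ k, G.dist u a = k + 1 := by
      have := hG.pos_dist_of_ne (Ne.symm hau)
      exact ⟨G.dist u a - 1, by omega⟩
    have t1 := transfer hG u k a hk D 1 (by rw [← hk]; omega)
    set D1 : V → ℕ := fun w => if w = u then D u - 1 * 2 ^ (k + 1)
      else if w = a then D a + 1 else D w with hD1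
    have h1u : D1 u = D u - 2 ^ G.dist u a := by simp [hD1, hk]
    have h1a : D1 a = D a + 1 := by simp [hD1, hau]
    have h1S : (∑ x ∈ S, 2 ^ G.dist u x) ≤ D1 u := by omega
    obtain ⟨D', hD', h'u, h'S, h'o⟩ := ih huS D1 h1S
    refine ⟨D', t1.trans hD', ?_, ?_, ?_⟩
    · rw [h'u, h1u, Finset.sum_insert ha]; omega
    · intro x hx
      rcases Finset.mem_insert.mp hx with rfl | hx
      · rw [h'o x ha hau, h1a]
      · rw [h'S x hx, hD1]
        have hxa : x ≠ a := fun h => ha (h ▸ hx)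
        have hxu : x ≠ u := fun h => huS (h ▸ hx)
        simp [hxa, hxu]
    · intro w hw hwu
      have hwa : w ≠ a := fun h => hw (h ▸ Finset.mem_insert_self a S)
      have hwS : w ∉ S := fun h => hw (Finset.mem_insert_of_mem h)
      rw [h'o w hwS hwu, hD1]; simp [hwa, hwu]
end Aux2

section Aux3
variable {V : Type*} [DecidableEq V] [Fintype V] {G : SimpleGraph V}

lemma pot_mono (hG : G.Connected) (u : V) {D D' : V → ℕ} (h : PebblingStep G D D') :
    (∑ v, D' v * 2 ^ G.dist u v) ≤ ∑ v, D v * 2 ^ G.dist u v := by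
  obtain ⟨a, b, hab, h2, rfl⟩ := h
  set g : V → ℕ := fun v => 2 ^ G.dist u v with hg
  have hne : a ≠ b := hab.ne
  have hbmem : b ∈ Finset.univ.erase a := Finset.mem_erase.mpr ⟨hne.symm, Finset.mem_univ b⟩
  have split : ∀ E : V → ℕ, ∑ v, E v * g v
      = E a * g a + (E b * g b + ∑ v ∈ (Finset.univ.erase a).erase b, E v * g v) := by
    intro E
    rw [← Finset.add_sum_erase _ (fun v => E v * g v) (Finset.mem_univ a),
      ← Finset.add_sum_erase _ (fun v => E v * g v) hbmem]
  rw [split, split]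
  have hsame : ∑ v ∈ (Finset.univ.erase a).erase b,
      (if v = a then D a - 2 else if v = b then D b + 1 else D v) * g v
      = ∑ v ∈ (Finset.univ.erase a).erase b, D v * g v := by
    apply Finset.sum_congr rfl
    intro v hv
    rw [Finset.mem_erase, Finset.mem_erase] at hv
    simp [hv.1, hv.2.1]
  rw [hsame]
  have ea : (if a = a then D a - 2 else if a = b then D b + 1 else D a) = D a - 2 := by simp
  have eb : (if b = a then D a - 2 else if b = b then D b + 1 else D b) = D b + 1 := by
    simp [hne.symm]
  rw [ea, eb]
  have hgb : g b ≤ 2 * g a := by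
    have hd : G.dist u b ≤ G.dist u a + 1 := by
      have := hG.dist_triangle (u := u) (v := a) (w := b)
      have := SimpleGraph.dist_eq_one_iff_adj.mpr hab
      omega
    calc g b ≤ 2 ^ (G.dist u a + 1) := Nat.pow_le_pow_right (by norm_num) hd
      _ = 2 * g a := by rw [pow_succ]; ring
  have e1 : (D a - 2) * g a = D a * g a - 2 * g a := by rw [Nat.sub_mul]
  have e2 : (D b + 1) * g b = D b * g b + g b := by ring
  have e3 : 2 * g a ≤ D a * g a := Nat.mul_le_mul_right _ h2
  omega

lemma pot_mono_rt (hG : G.Connected) (u : V) {D D' : V → ℕ}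
    (h : Relation.ReflTransGen (PebblingStep G) D D') :
    (∑ v, D' v * 2 ^ G.dist u v) ≤ ∑ v, D v * 2 ^ G.dist u v := by
  induction h with
  | refl => exact le_refl _
  | tail _ hstep ih => exact le_trans (pot_mono hG u hstep) ih
end Aux3

theorem simple_distribution_requirement {V : Type*} [DecidableEq V] [Fintype V]
    (G : SimpleGraph V) (hG : G.Connected) (u : V) :
    Coverable G (fun w => if w = u then ∑ x : V, 2 ^ G.dist u x else 0) ∧
      ¬ Coverable G (fun w => if w = u then (∑ x : V, 2 ^ G.dist u x) - 1 else 0) := by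
  set N := ∑ x : V, 2 ^ G.dist u x with hN
  have hsplit : N = 1 + ∑ x ∈ Finset.univ.erase u, 2 ^ G.dist u x := by
    rw [hN, ← Finset.add_sum_erase _ _ (Finset.mem_univ u), SimpleGraph.dist_self, pow_zero]
  constructor
  · set D : V → ℕ := fun w => if w = u then N else 0 with hD
    have hDu : D u = N := by simp [hD]
    obtain ⟨D', hRT, h'u, h'S, -⟩ := cover_set hG u (Finset.univ.erase u)
      (by simp) D (by omega)
    refine ⟨D', hRT, fun v => ?_⟩
    by_cases hv : v = u
    · subst hv; omega
    · have := h'S v (Finset.mem_erase.mpr ⟨hv, Finset.mem_univ v⟩)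
      omega
  · rintro ⟨D', hRT, hcov⟩
    have hfin : N ≤ ∑ v, D' v * 2 ^ G.dist u v := by
      rw [hN]
      apply Finset.sum_le_sum
      intro v _
      calc 2 ^ G.dist u v = 1 * 2 ^ G.dist u v := (one_mul _).symm
        _ ≤ D' v * 2 ^ G.dist u v := Nat.mul_le_mul_right _ (hcov v)
    have hinit : (∑ v, (if v = u then N - 1 else 0) * 2 ^ G.dist u v) = N - 1 := by
      rw [Finset.sum_eq_single u]
      · simp [SimpleGraph.dist_self]
      · intro v _ hv; simp [hv]
      · intro h; exact absurd (Finset.mem_univ u) h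
    have := pot_mono_rt hG u hRT
    rw [hinit] at this
    omega
end
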